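/- arXiv:1304.4626 — 12 statements merged into one kernel-verified Lean document; each statement's English description precedes it below -/
import Mathlib

section
/- Let M = (E, I) be a matroid on a finite ground set E that is representable over a field F and has rank p + q. Let S be a finite family of independent sets of M, each of size p, and let w : S → ℕ be a weight function. Then there exists a subfamily Ŝ ⊆ S with |Ŝ| ≤ C(p+q, p) (the binomial coefficient) such that Ŝ is min q-representative for S: for every set Y ⊆ E with |Y| ≤ q, if there is X ∈ S with X ∩ Y = ∅ and X ∪ Y ∈ I, then there is X̂ ∈ Ŝ with X̂ ∩ Y = ∅, X̂ ∪ Y ∈ I, and w(X̂) ≤ w(X). -/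
/-- A matroid `M` is representable over a field `𝔽` if there is an assignment of vectors
(columns of a matrix) to the elements of the ground set such that a subset of the ground set
is independent in `M` exactly when the corresponding vectors are linearly independent. -/
def MatroidRepresentable {α : Type*} (M : Matroid α) (𝔽 : Type*) [Field 𝔽] : Prop :=
  ∃ (n : ℕ) (v : α → (Fin n → 𝔽)),
    ∀ I : Set α, I ⊆ M.E → (M.Indep I ↔ LinearIndependent 𝔽 (fun x : I => v x))

/-- `M` has rank `k`: some base (equivalently, every base) of `M` has `k` elements. -/
def MatroidRankEq {α : Type*} (M : Matroid α) (k : ℕ) : Prop :=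
  ∃ B, M.IsBase B ∧ B.encard = (k : ℕ∞)

/-- `Shat ⊆ S` is a min `q`-representative subfamily of `S` with respect to the matroid `M`
and the weight function `w`: for every `Y ⊆ M.E` with `|Y| ≤ q`, whenever some `X ∈ S` is
disjoint from `Y` with `X ∪ Y` independent, some `X̂ ∈ Shat` is disjoint from `Y` with
`X̂ ∪ Y` independent and `w X̂ ≤ w X`. -/
def MinQRepFam {α : Type*} (M : Matroid α) (q : ℕ) (w : Set α → ℕ)
    (S Shat : Set (Set α)) : Prop :=
  Shat ⊆ S ∧
    ∀ Y : Set α, Y ⊆ M.E → Y.encard ≤ (q : ℕ∞) →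
      ∀ X ∈ S, Disjoint X Y → M.Indep (X ∪ Y) →
        ∃ Xhat ∈ Shat, Disjoint Xhat Y ∧ M.Indep (Xhat ∪ Y) ∧ w Xhat ≤ w X

/-! Represent `M` in a space `V` of dimension at most `p + q` and send each `X ∈ S` to the
`p`-vector `ι X = ⋀_{x ∈ X} u x` in `⋀^p V`, a space of dimension at most `C(p+q, p)`.
Scanning `S` by increasing weight and keeping `X` only when `ι X` is not yet spanned by the kept
vectors yields a linearly independent, hence small, subfamily `Ŝ` such that every `ι X` is a
combination of vectors `ι X̂` with `X̂ ∈ Ŝ` and `w X̂ ≤ w X`. For a set `Y`, the linear map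
`ξ ↦ ξ ∧ ι Y` is nonzero at `ι X` exactly when `X` is disjoint from `Y` and `X ∪ Y` is independent;
being nonzero at `ι X`, it is nonzero at one of those `ι X̂`. -/

open Set Function Submodule

theorem Set.exists_fin_param_of_encard_eq {α : Type*} {s : Set α} {n : ℕ} (h : s.encard = n) :
    ∃ f : Fin n → α, Injective f ∧ range f = s := by
  obtain ⟨m, f, hf, rfl⟩ := (finite_of_encard_eq_coe h).fin_param
  obtain rfl : m = n := by simpa [← image_univ, hf.encard_image] using h
  exact ⟨f, hf, rfl⟩

theorem Fin.comp_append {α β : Type*} {m n : ℕ} (u : α → β) (a : Fin m → α) (b : Fin n → α) :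
    u ∘ Fin.append a b = Fin.append (u ∘ a) (u ∘ b) := by
  funext i
  refine Fin.addCases (fun i => ?_) (fun i => ?_) i <;> simp

theorem Fin.range_append {α : Type*} {m n : ℕ} (a : Fin m → α) (b : Fin n → α) :
    range (Fin.append a b) = range a ∪ range b := by
  rw [← Sum.elim_range, ← Fin.append_comp_sumElim]
  exact (finSumFinEquiv.surjective.range_comp _).symm

section LinearAlgebra

variable {K V : Type*} [Field K] [AddCommGroup V] [Module K V]

theorem linearIndependent_comp_iff {ι α : Type*} (u : α → V) (h : ι → α) :
    LinearIndependent K (u ∘ h) ↔ Injective h ∧ LinearIndepOn K u (range h) :=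
  ⟨fun hl => ⟨hl.injective.of_comp, (linearIndepOn_range_iff hl.injective.of_comp u).2 hl⟩,
    fun ⟨hi, hl⟩ => (linearIndepOn_range_iff hi u).1 hl⟩

theorem linearIndependent_comp_append_iff {α : Type*} (u : α → V) {m n : ℕ} {a : Fin m → α}
    {b : Fin n → α} (ha : Injective a) (hb : Injective b) :
    LinearIndependent K (u ∘ Fin.append a b) ↔
      Disjoint (range a) (range b) ∧ LinearIndepOn K u (range a ∪ range b) := by
  rw [linearIndependent_comp_iff, Fin.append_injective_iff, disjoint_range_iff, Fin.range_append]
  exact ⟨fun ⟨⟨_, _, hab⟩, hl⟩ => ⟨hab, hl⟩, fun ⟨hab, hl⟩ => ⟨⟨ha, hb, hab⟩, hl⟩⟩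

theorem ExteriorAlgebra.ιMulti_ne_zero_iff {n : ℕ} (v : Fin n → V) :
    ιMulti K n v ≠ 0 ↔ LinearIndependent K v := by
  refine ⟨fun h => by_contra fun hv => h ((ιMulti K n).map_linearDependent v hv), fun hv => ?_⟩
  have := (exteriorPower.ιMulti_family_linearIndependent_field (n := n) hv).ne_zero
    (Set.powersetCard.ofFinEmbEquiv (RelEmbedding.refl (α := Fin n) (· ≤ ·)))
  rw [Ne, ← ZeroMemClass.coe_eq_zero] at this
  simpa [exteriorPower.ιMulti_family] using this

theorem ExteriorAlgebra.ιMulti_comp_mul_ιMulti_comp_ne_zero_iff {α : Type*} (u : α → V)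
    {m n : ℕ} {a : Fin m → α} {b : Fin n → α} (ha : Injective a) (hb : Injective b) :
    ιMulti K m (u ∘ a) * ιMulti K n (u ∘ b) ≠ 0 ↔
      Disjoint (range a) (range b) ∧ LinearIndepOn K u (range a ∪ range b) := by
  rw [ιMulti_mul_ιMulti, ← Fin.comp_append, ιMulti_ne_zero_iff,
    linearIndependent_comp_append_iff u ha hb]

theorem Submodule.exists_linearMap_injOn (W : Submodule K V) [FiniteDimensional K W] :
    ∃ f : V →ₗ[K] (Fin (Module.finrank K W) → K), InjOn f W := by
  obtain ⟨g, hg⟩ := W.subtype.exists_leftInverse_of_injective W.ker_subtype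
  refine ⟨(Module.finBasis K W).equivFun.toLinearMap ∘ₗ g, fun x hx y hy hxy => ?_⟩
  have hgW : ∀ z (hz : z ∈ W), g z = ⟨z, hz⟩ := fun z hz => LinearMap.congr_fun hg ⟨z, hz⟩
  exact congrArg Subtype.val
    ((hgW x hx).symm.trans (((Module.finBasis K W).equivFun.injective hxy).trans (hgW y hy)))

end LinearAlgebra

theorem MatroidRankEq.encard_le_of_indep {α : Type*} {M : Matroid α} {r : ℕ}
    (h : MatroidRankEq M r) {I : Set α} (hI : M.Indep I) : I.encard ≤ r := by
  obtain ⟨B₀, hB₀, hcard⟩ := h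
  obtain ⟨B, hB, hIB⟩ := hI.exists_isBase_superset
  exact (encard_mono hIB).trans (hB.encard_eq_encard_of_isBase hB₀ ▸ hcard).le

theorem MatroidRepresentable.exists_repr_le_rank {α 𝔽 : Type*} [Field 𝔽] {M : Matroid α} {r : ℕ}
    (hrep : MatroidRepresentable M 𝔽) (hrank : MatroidRankEq M r) :
    ∃ (n : ℕ) (u : α → Fin n → 𝔽), n ≤ r ∧ ∀ I ⊆ M.E, (M.Indep I ↔ LinearIndepOn 𝔽 u I) := by
  obtain ⟨m, v, hv⟩ := hrep
  obtain ⟨B, hBE, -, hspan, hB⟩ :=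
    exists_linearIndepOn_extension (linearIndepOn_empty 𝔽 v) (empty_subset M.E)
  set W := span 𝔽 (v '' M.E)
  have hW : W = span 𝔽 (v '' B) :=
    le_antisymm (span_le.2 hspan) (span_mono (image_mono hBE))
  have hrankW : Module.finrank 𝔽 W ≤ r := by
    have h := toENat_rank_span_set hB
    rw [← hW, ← Module.finrank_eq_rank, Cardinal.toENat_nat] at h
    exact_mod_cast h ▸ hrank.encard_le_of_indep ((hv B hBE).2 hB)
  obtain ⟨f, hf⟩ := W.exists_linearMap_injOn
  refine ⟨_, f ∘ v, hrankW, fun I hI => ?_⟩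
  rw [hv I hI, f.linearIndepOn_iff_of_injOn (hf.mono (span_mono (image_mono hI)))]
  rfl

theorem exists_linearIndepOn_forall_mem_span_weight_le {K V ι β : Type*} [DivisionRing K]
    [AddCommGroup V] [Module K V] [LinearOrder β] (φ : ι → V) (w : ι → β) (S : Finset ι) :
    ∃ T ⊆ S, LinearIndepOn K φ (T : Set ι) ∧
      ∀ X ∈ S, φ X ∈ span K (φ '' {X' | X' ∈ T ∧ w X' ≤ w X}) := by
  classical
  induction S using Finset.strongInduction with
  | _ S ih =>
  rcases S.eq_empty_or_nonempty with rfl | hS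
  · exact ⟨∅, subset_rfl, by simp, by simp⟩
  -- a heaviest element is spanned by lighter ones as soon as it is spanned by the others at all
  obtain ⟨X₀, hX₀, hmax⟩ := S.exists_max_image w hS
  obtain ⟨T, hTS, hT, hspan⟩ := ih (S.erase X₀) (Finset.erase_ssubset hX₀)
  have hspan' : ∀ X ∈ S, X ≠ X₀ → φ X ∈ span K (φ '' {X' | X' ∈ T ∧ w X' ≤ w X}) :=
    fun X hX hne => hspan X (Finset.mem_erase.2 ⟨hne, hX⟩)
  by_cases hX₀T : φ X₀ ∈ span K (φ '' (T : Set ι))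
  · refine ⟨T, hTS.trans (S.erase_subset X₀), hT, fun X hX => ?_⟩
    rcases eq_or_ne X X₀ with rfl | hne
    · convert hX₀T using 4
      ext X'
      exact and_iff_left_of_imp fun hX' => hmax X' (Finset.mem_of_mem_erase (hTS hX'))
    · exact hspan' X hX hne
  · refine ⟨insert X₀ T, Finset.insert_subset hX₀ (hTS.trans (S.erase_subset X₀)), ?_,
      fun X hX => ?_⟩
    · rw [Finset.coe_insert]
      exact hT.insert hX₀T
    rcases eq_or_ne X X₀ with rfl | hne
    · exact subset_span ⟨X, ⟨Finset.mem_insert_self X T, le_rfl⟩, rfl⟩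
    · refine span_mono (image_mono (ofPred_subset_ofPred.2 fun X' hX' => ?_)) (hspan' X hX hne)
      exact ⟨Finset.mem_insert_of_mem hX'.1, hX'.2⟩

theorem exists_apply_ne_zero_of_mem_span {K V N : Type*} [Field K] [AddCommGroup V] [Module K V]
    [AddCommGroup N] [Module K N] (L : V →ₗ[K] N) {s : Set V} {x : V} (hx : x ∈ span K s)
    (hLx : L x ≠ 0) : ∃ y ∈ s, L y ≠ 0 := by
  by_contra! h
  exact hLx (span_le.2 (fun y hy => LinearMap.mem_ker.2 (h y hy)) hx)

/-- Let `M` be a matroid on a finite ground set, representable over a field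
`𝔽`, of rank `p + q`. Let `S` be a finite family of independent sets of `M`, each of size `p`,
with weights `w`. Then there is a subfamily `Shat ⊆ S` of size at most `C(p+q, p)` which is
min `q`-representative for `S`. -/
theorem stmt0 {α 𝔽 : Type*} [Field 𝔽] (M : Matroid α) (hE : M.E.Finite)
    (hrep : MatroidRepresentable M 𝔽) (p q : ℕ) (hrank : MatroidRankEq M (p + q))
    (S : Set (Set α)) (hSfin : S.Finite)
    (hS : ∀ X ∈ S, M.Indep X ∧ X.encard = (p : ℕ∞))
    (w : Set α → ℕ) :
    ∃ Shat : Set (Set α), Shat.ncard ≤ (p + q).choose p ∧ MinQRepFam M q w S Shat := by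
  classical
  obtain ⟨n, u, hn, hu⟩ := hrep.exists_repr_le_rank hrank
  choose x hx hxS using fun X (hX : X ∈ S) => exists_fin_param_of_encard_eq (hS X hX).2
  let φ : Set α → ⋀[𝔽]^p (Fin n → 𝔽) := fun X =>
    if hX : X ∈ S then exteriorPower.ιMulti 𝔽 p (u ∘ x X hX) else 0
  obtain ⟨T, hTS, hT, hspan⟩ :=
    exists_linearIndepOn_forall_mem_span_weight_le (K := 𝔽) φ w hSfin.toFinset
  have hTS' : ∀ X ∈ T, X ∈ S := fun X hX => hSfin.mem_toFinset.1 (hTS hX)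
  refine ⟨T, ?_, fun X hX => hTS' X hX, fun Y hYE _ X hX hXY hXYi => ?_⟩
  · calc (T : Set (Set α)).ncard = T.card := ncard_coe_finset T
      _ ≤ Module.finrank 𝔽 (⋀[𝔽]^p (Fin n → 𝔽)) := by simpa using hT.fintype_card_le_finrank
      _ = n.choose p := by simp [exteriorPower.finrank_eq]
      _ ≤ (p + q).choose p := Nat.choose_le_choose p hn
  obtain ⟨k, y, hy, rfl⟩ := (hE.subset hYE).fin_param
  let L := LinearMap.mulRight 𝔽 (ExteriorAlgebra.ιMulti 𝔽 k (u ∘ y)) ∘ₗ (⋀[𝔽]^p _).subtype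
  have hL : ∀ Z ∈ S, L (φ Z) ≠ 0 ↔ Disjoint Z (range y) ∧ M.Indep (Z ∪ range y) := by
    intro Z hZ
    have := ExteriorAlgebra.ιMulti_comp_mul_ιMulti_comp_ne_zero_iff (K := 𝔽) u (hx Z hZ) hy
    rw [hxS Z hZ] at this
    rw [hu _ (union_subset (hS Z hZ).1.subset_ground hYE)]
    simpa [L, φ, hZ] using this
  obtain ⟨_, ⟨X', ⟨hX'T, hw⟩, rfl⟩, hLX'⟩ := exists_apply_ne_zero_of_mem_span L
    (hspan X (hSfin.mem_toFinset.2 hX)) ((hL X hX).2 ⟨hXY, hXYi⟩)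
  obtain ⟨hX'Y, hX'Yi⟩ := (hL X' (hTS' X' hX'T)).1 hLX'
  exact ⟨X', hX'T, hX'Y, hX'Yi, hw⟩
end

section
/- Let F be a field, k = p + q, and let A be a k × n matrix over F of rank k, with columns indexed by E = {1, …, n}. For a p-subset S of E whose columns in A are linearly independent, let φ(S) be the vector in F^{C(k,p)}, indexed by the p-subsets I of the row set {1,…,k}, whose I-coordinate is det(A[I, S]), the p × p minor of A with rows I and columns S (rows and columns taken in increasing order). Let 𝒮 be a finite family of p-subsets of E, each with linearly independent columns, and let W ⊆ 𝒮 be such that every vector φ(S) with S ∈ 𝒮 lies in the linear span of {φ(Ŝ) : Ŝ ∈ W}. Then W is q-representative for 𝒮: for every Y ⊆ E with |Y| ≤ q, if there is S ∈ 𝒮 with S ∩ Y = ∅ and the columns of A indexed by S ∪ Y linearly independent, then there is Ŝ ∈ W with Ŝ ∩ Y = ∅ and the columns of A indexed by Ŝ ∪ Y linearly independent. -/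
/-!
Extend `S ∪ Y` to a set `T` of `k` independent columns and put `Y' = T \ S`, a `q`-set.
The form `v ↦ det [v | A_{Y'}]` on `p`-tuples of vectors of `𝔽^k` is alternating, so by the
generalized Laplace expansion it is a fixed linear functional of the vector of `p × p` minors:
`det [A_{S'} | A_{Y'}] = c ⬝ᵥ φ(S')`. This functional is nonzero at `φ(S)`, hence, as `φ(S)` lies
in the span of `φ(W)`, also at some `φ(Ŝ)` with `Ŝ ∈ W`. Then the columns `Ŝ ∪ Y'` form a basis,
so `Ŝ` misses `Y ⊆ Y'` and the columns `Ŝ ∪ Y` are independent.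
-/

/-- The `p × p` minor `det A[I, S]` of the matrix `A`, where the rows `I` and columns `S`
are taken in increasing order (junk value `0` if `I` or `S` does not have exactly `p`
elements). -/
noncomputable def detMinor {𝔽 : Type*} [Field 𝔽] {k n : ℕ} (p : ℕ)
    (A : Matrix (Fin k) (Fin n) 𝔽) (I : Finset (Fin k)) (S : Finset (Fin n)) : 𝔽 :=
  if h : I.card = p ∧ S.card = p then
    (A.submatrix (fun a => I.orderEmbOfFin h.1 a) (fun b => S.orderEmbOfFin h.2 b)).det
  else 0

/-- The vector `φ(S) ∈ 𝔽^{C(k,p)}`, indexed by the `p`-subsets `I` of the row set of `A`,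
whose `I`-coordinate is the minor `det A[I, S]`. -/
noncomputable def phiVec {𝔽 : Type*} [Field 𝔽] {k n : ℕ} (p : ℕ)
    (A : Matrix (Fin k) (Fin n) 𝔽) (S : Finset (Fin n)) :
    {I : Finset (Fin k) // I.card = p} → 𝔽 :=
  fun I => detMinor p A I.1 S

/-- The columns of `A` indexed by `S` are linearly independent. -/
def ColsIndep {𝔽 : Type*} [Field 𝔽] {k n : ℕ} (A : Matrix (Fin k) (Fin n) 𝔽)
    (S : Finset (Fin n)) : Prop :=
  LinearIndependent 𝔽 (fun j : (S : Set (Fin n)) => fun i => A i j)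

open Matrix

namespace AlternatingMap

variable {R M N ι ι' : Type*} [Semiring R] [AddCommMonoid M] [Module R M]
  [AddCommMonoid N] [Module R N]

def fixInr (f : M [⋀^ι ⊕ ι']→ₗ[R] N) (y : ι' → M) : M [⋀^ι]→ₗ[R] N where
  toFun v := f (Sum.elim v y)
  map_update_add' v a x x' := by classical simp only [← Sum.update_elim_inl, f.map_update_add]
  map_update_smul' v a c x := by classical simp only [← Sum.update_elim_inl, f.map_update_smul]
  map_eq_zero_of_eq' v a b hv hab :=
    f.map_eq_zero_of_eq _ (i := .inl a) (j := .inl b) (by simpa) (by simpa)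

@[simp]
theorem fixInr_apply (f : M [⋀^ι ⊕ ι']→ₗ[R] N) (y : ι' → M) (v : ι → M) :
    f.fixInr y v = f (Sum.elim v y) := rfl

end AlternatingMap

section Minors

variable {R ι : Type*} [CommRing R] [LinearOrder ι] {p : ℕ}

noncomputable def minorAlternating (I : Finset ι) (hI : I.card = p) :
    (ι → R) [⋀^Fin p]→ₗ[R] R :=
  detRowAlternating.compLinearMap (LinearMap.funLeft R R (I.orderEmbOfFin hI))

theorem minorAlternating_apply (I : Finset ι) (hI : I.card = p) (v : Fin p → ι → R) :
    minorAlternating I hI v = (of fun a b => v a (I.orderEmbOfFin hI b)).det := rfl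

theorem minorAlternating_single (I J : Finset ι) (hI : I.card = p) (hJ : J.card = p) :
    minorAlternating I hI (fun a => Pi.single (J.orderEmbOfFin hJ a) (1 : R)) =
      if I = J then 1 else 0 := by
  split_ifs with h
  · subst h
    rw [minorAlternating_apply, ← det_one (R := R) (n := Fin p)]
    congr 1
    ext a b
    simp [Pi.single_apply, one_apply, eq_comm]
  · obtain ⟨x, hxJ, hxI⟩ : ∃ x ∈ J, x ∉ I := by
      by_contra! hJI
      exact h (Finset.eq_of_subset_of_card_le hJI (by rw [hI, hJ])).symm
    obtain ⟨a, rfl⟩ : x ∈ Set.range (J.orderEmbOfFin hJ) := by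
      rwa [Finset.range_orderEmbOfFin]
    refine det_eq_zero_of_row_eq_zero a fun b => ?_
    have : J.orderEmbOfFin hJ a ≠ I.orderEmbOfFin hI b :=
      fun hab => hxI (hab ▸ I.orderEmbOfFin_mem hI b)
    simp [this.symm]

theorem exists_perm_orderEmbOfFin_comp_eq {w : Fin p → ι} (hw : Function.Injective w)
    (h : (Finset.univ.image w).card = p) :
    ∃ σ : Equiv.Perm (Fin p), (Finset.univ.image w).orderEmbOfFin h ∘ σ = w := by
  set e := (Finset.univ.image w).orderIsoOfFin h
  let τ : Fin p → Fin p := fun a => e.symm ⟨w a, Finset.mem_image_of_mem w (Finset.mem_univ a)⟩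
  have hτ : Function.Injective τ := fun a b hab => hw (congrArg Subtype.val (e.symm.injective hab))
  refine ⟨Equiv.ofBijective τ (Finite.injective_iff_bijective.1 hτ), funext fun a => ?_⟩
  simp only [Function.comp_apply, Equiv.ofBijective_apply, τ, ← Finset.coe_orderIsoOfFin_apply,
    e, OrderIso.apply_symm_apply]

variable [Fintype ι]

theorem AlternatingMap.eq_sum_mul_minorAlternating (f : (ι → R) [⋀^Fin p]→ₗ[R] R)
    (v : Fin p → ι → R) :
    f v = ∑ I : {I : Finset ι // I.card = p},
      f (fun a => Pi.single (I.1.orderEmbOfFin I.2 a) 1) * minorAlternating I.1 I.2 v := by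
  set c := fun I : {I : Finset ι // I.card = p} =>
    f (fun a => Pi.single (I.1.orderEmbOfFin I.2 a) 1)
  have sum_apply (g : {I : Finset ι // I.card = p} → (ι → R) [⋀^Fin p]→ₗ[R] R) (u) :
      (∑ I, g I) u = ∑ I, g I u :=
    map_sum (AddMonoidHom.mk' (fun g : (ι → R) [⋀^Fin p]→ₗ[R] R => g u) fun _ _ => rfl) _ _
  suffices f = ∑ I, c I • minorAlternating I.1 I.2 by
    conv_lhs => rw [this]
    simp only [sum_apply, AlternatingMap.smul_apply, smul_eq_mul, c]
  refine Module.Basis.ext_alternating (Pi.basisFun R ι) fun w hw => ?_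
  have hJ : (Finset.univ.image w).card = p := by
    rw [Finset.card_image_of_injective _ hw, Finset.card_univ, Fintype.card_fin]
  set J : {I : Finset ι // I.card = p} := ⟨_, hJ⟩
  obtain ⟨σ, hσ⟩ := exists_perm_orderEmbOfFin_comp_eq hw hJ
  have hwσ : (fun a => Pi.basisFun R ι (w a)) =
      (fun a => Pi.single (J.1.orderEmbOfFin J.2 a) 1) ∘ σ := by
    rw [← hσ]; ext; simp [Pi.basisFun_apply, J]
  rw [hwσ, sum_apply, f.map_perm]
  simp [AlternatingMap.map_perm, minorAlternating_single, ← Subtype.ext_iff, c]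

end Minors

theorem Matrix.detRowAlternating_domDomCongr_ne_zero_iff {K ι κ : Type*} [Field K] [Fintype ι]
    [DecidableEq ι] (e : ι ≃ κ) (v : κ → ι → K) :
    (detRowAlternating.domDomCongr e) v ≠ 0 ↔ LinearIndependent K v := by
  rw [AlternatingMap.domDomCongr_apply, ← isUnit_iff_ne_zero, ← linearIndependent_equiv e]
  exact (isUnit_iff_isUnit_det (of (v ∘ e))).symm.trans linearIndependent_rows_iff_isUnit.symm

theorem linearIndependent_comp_sumElim_iff {R M ι κ ν : Type*} [Ring R] [Nontrivial R]
    [AddCommGroup M] [Module R M] (g : ν → M) {s : ι → ν} {t : κ → ν}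
    (hs : Function.Injective s) (ht : Function.Injective t) :
    LinearIndependent R (Sum.elim (g ∘ s) (g ∘ t)) ↔
      Disjoint (Set.range s) (Set.range t) ∧ LinearIndepOn R g (Set.range s ∪ Set.range t) := by
  rw [← Sum.comp_elim, ← Set.Sum.elim_range]
  constructor
  · intro h
    have hst := h.injective.of_comp
    refine ⟨Set.disjoint_left.2 ?_, (linearIndepOn_range_iff hst g).2 h⟩
    rintro _ ⟨a, rfl⟩ ⟨b, hb⟩
    exact Sum.inl_ne_inr (hst (hb.symm : Sum.elim s t (.inl a) = Sum.elim s t (.inr b)))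
  · rintro ⟨hd, h⟩
    have hst : Function.Injective (Sum.elim s t) :=
      hs.sumElim ht fun a b hab => Set.disjoint_left.1 hd ⟨a, rfl⟩ ⟨b, hab.symm⟩
    exact (linearIndepOn_range_iff hst g).1 h

section Columns

variable {K : Type*} [Field K] {k n : ℕ} (A : Matrix (Fin k) (Fin n) K)

theorem colsIndep_iff_linearIndepOn_col {S : Finset (Fin n)} :
    ColsIndep A S ↔ LinearIndepOn K A.col (S : Set (Fin n)) :=
  Iff.rfl

theorem ColsIndep.mono {U V : Finset (Fin n)} (hV : ColsIndep A V) (h : U ⊆ V) :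
    ColsIndep A U :=
  LinearIndepOn.mono (v := A.col) hV (Finset.coe_subset.2 h)

theorem span_col_eq_top_of_rank_eq (hA : A.rank = k) :
    Submodule.span K (Set.range A.col) = ⊤ :=
  Submodule.eq_top_of_finrank_eq (by rw [← rank_eq_finrank_span_cols, hA, Module.finrank_fin_fun])

theorem ColsIndep.exists_superset_card_eq (hA : A.rank = k) {U : Finset (Fin n)}
    (hU : ColsIndep A U) : ∃ T, U ⊆ T ∧ T.card = k ∧ ColsIndep A T := by
  classical
  obtain ⟨b, -, hUb, hspan, hb⟩ :=
    exists_linearIndepOn_extension (v := A.col) hU (Set.subset_univ _)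
  have htop : Submodule.span K (A.col '' b) = ⊤ := by
    rw [← top_le_iff, ← span_col_eq_top_of_rank_eq A hA, Submodule.span_le, ← Set.image_univ]
    exact hspan
  refine ⟨b.toFinset, by simpa using hUb, ?_, ?_⟩
  · rw [Set.toFinset_card, linearIndependent_iff_card_eq_finrank_span.1 hb, ← Set.image_eq_range,
      Set.finrank, htop, finrank_top, Module.finrank_fin_fun]
  · rwa [colsIndep_iff_linearIndepOn_col, Set.coe_toFinset]

end Columns

section Pairing

variable {K : Type*} [Field K] {k n p : ℕ} (A : Matrix (Fin k) (Fin n) K)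

theorem AlternatingMap.dotProduct_phiVec (f : (Fin k → K) [⋀^Fin p]→ₗ[K] K)
    {S : Finset (Fin n)} (hS : S.card = p) :
    (fun I : {I : Finset (Fin k) // I.card = p} =>
        f fun a => Pi.single (I.1.orderEmbOfFin I.2 a) 1) ⬝ᵥ phiVec p A S =
      f (A.col ∘ S.orderEmbOfFin hS) := by
  rw [f.eq_sum_mul_minorAlternating, dotProduct]
  refine Finset.sum_congr rfl fun I _ => congrArg _ ?_
  rw [phiVec, detMinor, dif_pos ⟨I.2, hS⟩, minorAlternating_apply, ← det_transpose]
  rfl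

theorem det_cols_sumElim_ne_zero_iff {q : ℕ} (e : Fin k ≃ Fin p ⊕ Fin q) {S Y : Finset (Fin n)}
    (hS : S.card = p) (hY : Y.card = q) :
    detRowAlternating.domDomCongr e
        (Sum.elim (A.col ∘ S.orderEmbOfFin hS) (A.col ∘ Y.orderEmbOfFin hY)) ≠ 0 ↔
      Disjoint S Y ∧ ColsIndep A (S ∪ Y) := by
  rw [detRowAlternating_domDomCongr_ne_zero_iff, linearIndependent_comp_sumElim_iff A.col
    (S.orderEmbOfFin hS).injective (Y.orderEmbOfFin hY).injective, Finset.range_orderEmbOfFin,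
    Finset.range_orderEmbOfFin, ← Finset.coe_union, Finset.disjoint_coe]
  rfl

end Pairing

theorem exists_dotProduct_ne_zero_of_mem_span {R ι : Type*} [CommSemiring R] [Fintype ι]
    {s : Set (ι → R)} {c x : ι → R} (hx : x ∈ Submodule.span R s) (hc : c ⬝ᵥ x ≠ 0) :
    ∃ y ∈ s, c ⬝ᵥ y ≠ 0 := by
  by_contra! h
  refine hc (Submodule.span_induction h (dotProduct_zero c) (fun y z _ _ hy hz => ?_)
    (fun a y _ hy => ?_) hx)
  · rw [dotProduct_add, hy, hz, add_zero]
  · rw [dotProduct_smul, hy, smul_zero]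

theorem stmt2_general {𝔽 : Type*} [Field 𝔽] (p q k n : ℕ) (hk : k = p + q)
    (A : Matrix (Fin k) (Fin n) 𝔽) (hArank : A.rank = k)
    (𝒮 : Finset (Finset (Fin n)))
    (hcard : ∀ S ∈ 𝒮, S.card = p)
    (W : Finset (Finset (Fin n))) (hW : W ⊆ 𝒮)
    (hspan : ∀ S ∈ 𝒮,
      phiVec p A S ∈ Submodule.span 𝔽 ((fun T => phiVec p A T) '' (W : Set (Finset (Fin n))))) :
    ∀ Y : Finset (Fin n), Y.card ≤ q → ∀ S ∈ 𝒮, Disjoint S Y → ColsIndep A (S ∪ Y) →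
      ∃ Shat ∈ W, Disjoint Shat Y ∧ ColsIndep A (Shat ∪ Y) := by
  intro Y _ S hS hSY hSYindep
  obtain ⟨T, hSYT, hTk, hT⟩ := hSYindep.exists_superset_card_eq A hArank
  have hST : S ⊆ T := (Finset.union_subset_iff.1 hSYT).1
  have hYTS : Y ⊆ T \ S := Finset.subset_sdiff.2 ⟨(Finset.union_subset_iff.1 hSYT).2, hSY.symm⟩
  have hTS : (T \ S).card = q := by
    rw [Finset.card_sdiff_of_subset hST, hTk, hcard S hS]
    omega
  let f := (detRowAlternating.domDomCongr ((finCongr hk).trans finSumFinEquiv.symm)).fixInr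
    (A.col ∘ (T \ S).orderEmbOfFin hTS)
  have key : ∀ S' (hS' : S'.card = p),
      (fun I : {I : Finset (Fin k) // I.card = p} =>
        f fun a => Pi.single (I.1.orderEmbOfFin I.2 a) 1) ⬝ᵥ phiVec p A S' ≠ 0 ↔
        Disjoint S' (T \ S) ∧ ColsIndep A (S' ∪ T \ S) := fun S' hS' => by
    rw [f.dotProduct_phiVec A hS', AlternatingMap.fixInr_apply, det_cols_sumElim_ne_zero_iff]
  have hS0 := (key S (hcard S hS)).2
    ⟨Finset.disjoint_sdiff, by rwa [Finset.union_sdiff_of_subset hST]⟩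
  obtain ⟨_, ⟨Shat, hShat, rfl⟩, hne⟩ := exists_dotProduct_ne_zero_of_mem_span (hspan S hS) hS0
  obtain ⟨hd, hind⟩ := (key Shat (hcard Shat (hW hShat))).1 hne
  exact ⟨Shat, hShat, hd.mono_right hYTS, hind.mono A (Finset.union_subset_union_right hYTS)⟩

/-- Let `A` be a `k × n` matrix of rank `k = p + q` over a field `𝔽`.
Let `𝒮` be a finite family of `p`-subsets of the column set, each with linearly independent
columns, and let `W ⊆ 𝒮` be such that every `φ(S)` with `S ∈ 𝒮` lies in the span of
`{φ(Ŝ) : Ŝ ∈ W}`. Then `W` is `q`-representative for `𝒮`. -/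
theorem stmt2 {𝔽 : Type*} [Field 𝔽] (p q k n : ℕ) (hk : k = p + q)
    (A : Matrix (Fin k) (Fin n) 𝔽) (hArank : A.rank = k)
    (𝒮 : Finset (Finset (Fin n)))
    (hcard : ∀ S ∈ 𝒮, S.card = p) (hindep : ∀ S ∈ 𝒮, ColsIndep A S)
    (W : Finset (Finset (Fin n))) (hW : W ⊆ 𝒮)
    (hspan : ∀ S ∈ 𝒮,
      phiVec p A S ∈ Submodule.span 𝔽 ((fun T => phiVec p A T) '' (W : Set (Finset (Fin n))))) :
    ∀ Y : Finset (Fin n), Y.card ≤ q → ∀ S ∈ 𝒮, Disjoint S Y → ColsIndep A (S ∪ Y) →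
      ∃ Shat ∈ W, Disjoint Shat Y ∧ ColsIndep A (Shat ∪ Y) :=
  stmt2_general p q k n hk A hArank 𝒮 hcard W hW hspan
end

section
/- Let V be a vector space over a field F, let S be a finite indexed family of vectors of V, and let w assign a natural-number weight to each member of S. Let W ⊆ S be a subfamily that is linearly independent and spans the linear span of S (i.e., W is a basis of span(S) chosen from S), and suppose W has minimum total weight among all subfamilies of S that are bases of span(S). Then for every v ∈ S, writing v = Σ_{u ∈ W} λ_u · u with coefficients λ_u ∈ F, every u ∈ W with λ_u ≠ 0 satisfies w(u) ≤ w(v). -/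
/-!
If some `i ∈ W` with `λ_i ≠ 0` had `w j < w i`, then `v i` lies in the span of `v j` and the other
members of `W`. By independence of `W`, `v j` is then outside the span of `W \ {i}` (in particular
`j ∉ W \ {i}`), so exchanging `i` for `j` gives another independent family spanning the same
space, of strictly smaller weight.
-/

open Submodule

section Exchange

variable {K V ι : Type*} [DivisionRing K] [AddCommGroup V] [Module K V] {v : ι → V}

theorem mem_span_insert_image_diff_singleton_of_coeff_ne_zero {W : Finset ι} {lam : ι → K}
    {i j : ι} (hexp : v j = ∑ k ∈ W, lam k • v k) (hi : i ∈ W) (hlam : lam i ≠ 0) :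
    v i ∈ span K (insert (v j) (v '' (↑W \ {i}))) := by
  classical
  rw [← Finset.coe_erase]
  have hrest : ∑ k ∈ W.erase i, lam k • v k ∈ span K (v '' ↑(W.erase i)) :=
    sum_mem fun k hk => smul_mem _ _ (subset_span (Set.mem_image_of_mem v hk))
  have hvi : lam i • v i = v j - ∑ k ∈ W.erase i, lam k • v k := by
    rw [hexp, ← Finset.add_sum_erase W _ hi, add_sub_cancel_right]
  rw [← smul_mem_iff _ hlam, hvi]
  exact sub_mem (subset_span (Set.mem_insert _ _)) (span_mono (Set.subset_insert _ _) hrest)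

variable {s : Set ι} {i j : ι}

theorem LinearIndepOn.notMem_span_diff_singleton_of_mem_span_insert (hs : LinearIndepOn K v s)
    (hi : i ∈ s) (hij : v i ∈ span K (insert (v j) (v '' (s \ {i})))) :
    v j ∉ span K (v '' (s \ {i})) := fun hj =>
  hs.notMem_span hi (span_insert_eq_span hj ▸ hij)

theorem LinearIndepOn.insert_diff_singleton_of_mem_span_insert (hs : LinearIndepOn K v s)
    (hi : i ∈ s) (hij : v i ∈ span K (insert (v j) (v '' (s \ {i})))) :
    LinearIndepOn K v (insert j (s \ {i})) :=
  (hs.mono Set.sdiff_subset).insert (hs.notMem_span_diff_singleton_of_mem_span_insert hi hij)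

theorem span_image_insert_diff_singleton_of_mem_span_insert
    (hij : v i ∈ span K (insert (v j) (v '' (s \ {i})))) (hj : v j ∈ span K (v '' s)) :
    span K (v '' insert j (s \ {i})) = span K (v '' s) := by
  rw [Set.image_insert_eq]
  apply le_antisymm
  · refine span_le.mpr (Set.insert_subset hj ?_)
    exact (Set.image_mono Set.sdiff_subset).trans subset_span
  · refine span_le.mpr ?_
    rintro _ ⟨k, hk, rfl⟩
    by_cases hki : k = i
    · exact hki ▸ hij
    · exact subset_span (Set.mem_insert_of_mem _ ⟨k, ⟨hk, hki⟩, rfl⟩)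

end Exchange

theorem stmt3_general {𝔽 V : Type*} [Field 𝔽] [AddCommGroup V] [Module 𝔽 V]
    {ι : Type*} (v : ι → V) (w : ι → ℕ)
    (W : Finset ι)
    (hindep : LinearIndependent 𝔽 (fun i : (W : Set ι) => v i))
    (hspan : Submodule.span 𝔽 (v '' (W : Set ι)) = Submodule.span 𝔽 (Set.range v))
    (hmin : ∀ W' : Finset ι,
      LinearIndependent 𝔽 (fun i : (W' : Set ι) => v i) →
      Submodule.span 𝔽 (v '' (W' : Set ι)) = Submodule.span 𝔽 (Set.range v) →
      ∑ i ∈ W, w i ≤ ∑ i ∈ W', w i)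
    (j : ι) (lam : ι → 𝔽) (hexp : v j = ∑ i ∈ W, lam i • v i) :
    ∀ i ∈ W, lam i ≠ 0 → w i ≤ w j := by
  classical
  intro i hi hlam
  by_contra! hlt
  have hindep : LinearIndepOn 𝔽 v W := hindep
  have hexch := mem_span_insert_image_diff_singleton_of_coeff_ne_zero hexp hi hlam
  have hjW : j ∉ W.erase i := fun hj =>
    hindep.notMem_span_diff_singleton_of_mem_span_insert hi hexch
      (subset_span ⟨j, by rwa [← Finset.coe_erase], rfl⟩)
  have hj : v j ∈ span 𝔽 (v '' W) := hspan ▸ subset_span (Set.mem_range_self j)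
  have hcoe : (↑(insert j (W.erase i)) : Set ι) = insert j (↑W \ {i}) := by
    rw [Finset.coe_insert, Finset.coe_erase]
  have hle := hmin (insert j (W.erase i))
    (show LinearIndepOn 𝔽 v _ from hcoe ▸ hindep.insert_diff_singleton_of_mem_span_insert hi hexch)
    (hcoe ▸ hspan ▸ span_image_insert_diff_singleton_of_mem_span_insert hexch hj)
  rw [Finset.sum_insert hjW, ← Finset.add_sum_erase W w hi] at hle
  omega

/-- Let `v : ι → V` be a finite indexed family of vectors of a vector space
`V` over a field `𝔽`, with natural-number weights `w`. Let `W` be a subfamily of the index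
set which is linearly independent and spans the span of the whole family (a basis of
`span (range v)` chosen from the family), of minimum total weight among all such subfamilies.
Then for every index `j`, writing `v j = ∑ i ∈ W, lam i • v i`, every `i ∈ W` with
`lam i ≠ 0` satisfies `w i ≤ w j`. -/
theorem stmt3 {𝔽 V : Type*} [Field 𝔽] [AddCommGroup V] [Module 𝔽 V]
    {ι : Type*} [Fintype ι] (v : ι → V) (w : ι → ℕ)
    (W : Finset ι)
    (hindep : LinearIndependent 𝔽 (fun i : (W : Set ι) => v i))
    (hspan : Submodule.span 𝔽 (v '' (W : Set ι)) = Submodule.span 𝔽 (Set.range v))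
    (hmin : ∀ W' : Finset ι,
      LinearIndependent 𝔽 (fun i : (W' : Set ι) => v i) →
      Submodule.span 𝔽 (v '' (W' : Set ι)) = Submodule.span 𝔽 (Set.range v) →
      ∑ i ∈ W, w i ≤ ∑ i ∈ W', w i)
    (j : ι) (lam : ι → 𝔽) (hexp : v j = ∑ i ∈ W, lam i • v i) :
    ∀ i ∈ W, lam i ≠ 0 → w i ≤ w j :=
  stmt3_general v w W hindep hspan hmin j lam hexp
end

section
/- Let M = (E, I) be a matroid of rank k, let S_1 be a family of independent sets of M each of size p_1, and let S_2 be a family of independent sets of M each of size p_2. If Ŝ_1 ⊆ S_1 is (k − p_1)-representative for S_1 and Ŝ_2 ⊆ S_2 is (k − p_2)-representative for S_2, then Ŝ_1 • Ŝ_2 is (k − p_1 − p_2)-representative for S_1 • S_2. -/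
/-- `Shat ⊆ S` is a `q`-representative subfamily of `S` with respect to the matroid `M`. -/
def QRepFam {α : Type*} (M : Matroid α) (q : ℕ) (S Shat : Set (Set α)) : Prop :=
  Shat ⊆ S ∧
    ∀ Y : Set α, Y ⊆ M.E → Y.encard ≤ (q : ℕ∞) →
      ∀ X ∈ S, Disjoint X Y → M.Indep (X ∪ Y) →
        ∃ Xhat ∈ Shat, Disjoint Xhat Y ∧ M.Indep (Xhat ∪ Y)

/-- The product `A • B = {X ∪ Y : X ∈ A, Y ∈ B, X ∩ Y = ∅}` of two families of sets. -/
def dotSet {α : Type*} (A B : Set (Set α)) : Set (Set α) :=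
  {Z | ∃ X ∈ A, ∃ Y ∈ B, Disjoint X Y ∧ Z = X ∪ Y}

/-! Given `X₁ ∪ X₂ ∪ Y` independent, first replace `X₂` by a representative `X̂₂ ∈ Ŝ₂`, treating
`X₁ ∪ Y` as the complementary set; then replace `X₁` by `X̂₁ ∈ Ŝ₁`, treating `X̂₂ ∪ Y` as the
complementary set. The size bounds on the complementary sets need `p₁ + p₂ ≤ k`; otherwise no
member of `S₁ • S₂` is independent and every subfamily is representative. -/

open Set

section

variable {α : Type*} {M : Matroid α}

theorem dotSet_mono {A A' B B' : Set (Set α)} (hA : A ⊆ A') (hB : B ⊆ B') :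
    dotSet A B ⊆ dotSet A' B' := by
  rintro Z ⟨X, hX, Y, hY, hXY, rfl⟩
  exact ⟨X, hA hX, Y, hB hY, hXY, rfl⟩

theorem encard_union_le_natCast {X Y : Set α} {a b c : ℕ} (hX : X.encard ≤ a) (hY : Y.encard ≤ b)
    (habc : a + b ≤ c) : (X ∪ Y).encard ≤ c :=
  calc (X ∪ Y).encard ≤ X.encard + Y.encard := encard_union_le X Y
    _ ≤ a + b := add_le_add hX hY
    _ ≤ c := by exact_mod_cast habc

theorem MatroidRankEq.encard_le {k : ℕ} (hM : MatroidRankEq M k) {I : Set α} (hI : M.Indep I) :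
    I.encard ≤ k := by
  obtain ⟨B, hB, hBk⟩ := hM
  exact hBk ▸ hB.encard_eq_eRank ▸ hI.encard_le_eRank

namespace QRepFam

variable {q : ℕ} {S Sh : Set (Set α)}

theorem exists_mem (h : QRepFam M q S Sh) {X Y : Set α} (hX : X ∈ S) (hXY : Disjoint X Y)
    (hI : M.Indep (X ∪ Y)) (hY : Y.encard ≤ q) :
    ∃ Xh ∈ Sh, Disjoint Xh Y ∧ M.Indep (Xh ∪ Y) :=
  h.2 Y (subset_union_right.trans hI.subset_ground) hY X hX hXY hI

theorem of_forall_not_indep (hSh : Sh ⊆ S) (hS : ∀ X ∈ S, ¬ M.Indep X) : QRepFam M q S Sh :=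
  ⟨hSh, fun _ _ _ X hX _ hI ↦ absurd (hI.subset subset_union_left) (hS X hX)⟩

theorem dotSet {q₁ q₂ p₁ p₂ : ℕ} {S₁ S₂ Sh₁ Sh₂ : Set (Set α)}
    (h₁ : QRepFam M q₁ S₁ Sh₁) (h₂ : QRepFam M q₂ S₂ Sh₂)
    (hS₁ : ∀ X ∈ S₁, X.encard ≤ p₁) (hS₂ : ∀ X ∈ S₂, X.encard ≤ p₂)
    (hq₁ : p₂ + q ≤ q₁) (hq₂ : p₁ + q ≤ q₂) :
    QRepFam M q (_root_.dotSet S₁ S₂) (_root_.dotSet Sh₁ Sh₂) := by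
  refine ⟨dotSet_mono h₁.1 h₂.1, ?_⟩
  rintro Y - hY _ ⟨X₁, hX₁, X₂, hX₂, hX₁₂, rfl⟩ hXY hI
  rw [disjoint_union_left] at hXY
  obtain ⟨Xh₂, hXh₂, hXh₂Y, hIh₂⟩ := h₂.exists_mem hX₂
    (disjoint_union_right.2 ⟨hX₁₂.symm, hXY.2⟩) (by rwa [union_left_comm, ← union_assoc])
    (encard_union_le_natCast (hS₁ X₁ hX₁) hY hq₂)
  rw [disjoint_union_right] at hXh₂Y
  obtain ⟨Xh₁, hXh₁, hXh₁Y, hIh₁⟩ := h₁.exists_mem hX₁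
    (disjoint_union_right.2 ⟨hXh₂Y.1.symm, hXY.1⟩) (by rwa [union_left_comm])
    (encard_union_le_natCast (hS₂ Xh₂ (h₂.1 hXh₂)) hY hq₁)
  rw [disjoint_union_right] at hXh₁Y
  exact ⟨Xh₁ ∪ Xh₂, ⟨Xh₁, hXh₁, Xh₂, hXh₂, hXh₁Y.1, rfl⟩,
    disjoint_union_left.2 ⟨hXh₁Y.2, hXh₂Y.2⟩, by rwa [union_assoc]⟩

end QRepFam

end

/-- Let `M` be a matroid of rank `k`, let `S₁` be a family of independent
sets each of size `p₁` and `S₂` a family of independent sets each of size `p₂`. If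
`Ŝ₁ ⊆ S₁` is `(k − p₁)`-representative for `S₁` and `Ŝ₂ ⊆ S₂` is `(k − p₂)`-representative
for `S₂`, then `Ŝ₁ • Ŝ₂` is `(k − p₁ − p₂)`-representative for `S₁ • S₂`. -/
theorem stmt6 {α : Type*} (M : Matroid α) (k : ℕ) (hrank : MatroidRankEq M k)
    (p₁ p₂ : ℕ) (S₁ S₂ : Set (Set α))
    (hS₁ : ∀ X ∈ S₁, M.Indep X ∧ X.encard = (p₁ : ℕ∞))
    (hS₂ : ∀ X ∈ S₂, M.Indep X ∧ X.encard = (p₂ : ℕ∞))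
    (Sh₁ Sh₂ : Set (Set α))
    (h₁ : QRepFam M (k - p₁) S₁ Sh₁) (h₂ : QRepFam M (k - p₂) S₂ Sh₂) :
    QRepFam M (k - p₁ - p₂) (dotSet S₁ S₂) (dotSet Sh₁ Sh₂) := by
  by_cases hp : p₁ + p₂ ≤ k
  · exact h₁.dotSet h₂ (fun X hX ↦ (hS₁ X hX).2.le) (fun X hX ↦ (hS₂ X hX).2.le)
      (by omega) (by omega)
  refine QRepFam.of_forall_not_indep (dotSet_mono h₁.1 h₂.1) ?_
  rintro _ ⟨X₁, hX₁, X₂, hX₂, hX₁₂, rfl⟩ hI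
  have hcard := hrank.encard_le hI
  rw [encard_union_eq hX₁₂, (hS₁ X₁ hX₁).2, (hS₂ X₂ hX₂).2] at hcard
  exact hp (by exact_mod_cast hcard)
end

section
/- Let p, q ≥ 1 be integers, let U be a finite set of size n ≥ 3, and set t = ⌈ ((p+q)^{p+q} / (p^p · q^q)) · (p+q+1) · ln n ⌉. Then there exists a family F of t subsets of U such that: (i) for every pair of disjoint subsets A, B ⊆ U with |A| = p and |B| = q there is a set F ∈ F with A ⊆ F and F ∩ B = ∅; and (ii) every subset A ⊆ U with |A| = p is contained in at most 6 · t · (p/(p+q))^p members of F. -/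
/-!
Choose the `t` sets independently at random, each containing every point independently with
probability `p/(p+q)`; this is realised by colouring `U` uniformly with `p + q` colours and
keeping the points with one of the first `p` colours, so that all probabilities are ratios of
cardinalities. With `r = (p/(p+q))^p` and `s = (q/(p+q))^q`, one set separates a fixed pair
`(A, B)` with probability `r s`, and the choice of `t` amounts to `r s t ≥ (p+q+1) ln n`. So no set
separates it with probability `(1 - r s)^t ≤ exp (-r s t) ≤ n^-(p+q+1)`, and a union bound over the
at most `n^(p+q)` pairs bounds the failure of (i) by `1/n`. A fixed `p`-set lies in one set with
probability `r`, hence in `a > 6 t r` of them with probability at most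
`C(t, a) r^a ≤ (e t r / a)^a ≤ (e/6)^a ≤ exp (-a/2)`. Bernoulli's inequality gives `(1 + p) s ≤ 1`,
so `a ≥ 6 (1 + p) (p+q+1) ln n`, and the union bound over the `n^p` sets bounds the failure of (ii)
by `1/n` as well. As `2/n < 1`, some family satisfies both.
-/

open Finset Fintype Real

theorem card_filter_le_card_mul_of_forall_exists {Ω κ : Type*} [Fintype Ω] (J : Finset κ)
    {Q : Ω → Prop} [DecidablePred Q] (P : κ → Ω → Prop) [∀ j, DecidablePred (P j)] {c : ℝ}
    (hQ : ∀ x, Q x → ∃ j ∈ J, P j x) (hc : ∀ j ∈ J, (#{x | P j x} : ℝ) ≤ c) :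
    (#{x | Q x} : ℝ) ≤ #J * c := by
  classical
  calc (#{x | Q x} : ℝ) ≤ #(J.biUnion fun j => {x | P j x}) := by
        gcongr
        intro x hx
        obtain ⟨j, hj, hPx⟩ := hQ x (mem_filter.mp hx).2
        exact mem_biUnion.mpr ⟨j, hj, mem_filter.mpr ⟨mem_univ x, hPx⟩⟩
    _ ≤ ∑ j ∈ J, (#{x | P j x} : ℝ) := mod_cast card_biUnion_le
    _ ≤ #J * c := by simpa using sum_le_sum hc

section Counting

variable {ι β : Type*} [Fintype ι] [DecidableEq ι] [Fintype β] [DecidableEq β] [Nonempty β]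

theorem card_filter_forall_mem_and_forall_mem {S T : Finset ι} (hST : Disjoint S T)
    (E F : Finset β) :
    (#{g : ι → β | (∀ i ∈ S, g i ∈ E) ∧ ∀ i ∈ T, g i ∈ F} : ℝ) =
      (#E / card β) ^ #S * (#F / card β) ^ #T * card β ^ card ι := by
  have hpi : ({g : ι → β | (∀ i ∈ S, g i ∈ E) ∧ ∀ i ∈ T, g i ∈ F} : Finset (ι → β)) =
      piFinset fun i => if i ∈ S then E else if i ∈ T then F else univ := by
    ext g
    simp only [mem_filter, mem_univ, true_and, mem_piFinset]
    constructor
    · rintro ⟨hS, hT⟩ i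
      split_ifs with hiS hiT
      exacts [hS i hiS, hT i hiT, mem_univ _]
    · intro h
      exact ⟨fun i hi => by simpa [hi] using h i,
        fun i hi => by simpa [hi, disjoint_right.mp hST hi] using h i⟩
  have hterm : ∀ i, (#(if i ∈ S then E else if i ∈ T then F else univ) : ℝ) =
      (if i ∈ S then (#E : ℝ) / card β else 1) * (if i ∈ T then (#F : ℝ) / card β else 1) *
        card β := by
    intro i
    by_cases hiS : i ∈ S
    · simp [hiS, disjoint_left.mp hST hiS]
    · by_cases hiT : i ∈ T <;> simp [hiS, hiT]
  rw [hpi, card_piFinset, Nat.cast_prod]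
  simp only [hterm, prod_mul_distrib, Fintype.prod_ite_mem, prod_const, card_univ]

theorem card_filter_forall_notMem (E : Finset β) :
    (#{g : ι → β | ∀ i, g i ∉ E} : ℝ) = (1 - #E / card β) ^ card ι * card β ^ card ι := by
  have h := card_filter_forall_mem_and_forall_mem (disjoint_empty_right univ) Eᶜ Eᶜ
    (ι := ι)
  simp only [mem_univ, forall_const, mem_compl, notMem_empty, IsEmpty.forall_iff,
    implies_true, and_true, Finset.card_empty, pow_zero, mul_one, Finset.card_univ] at h
  rw [h, card_compl, Nat.cast_sub (card_le_univ E), sub_div, div_self (by positivity)]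

theorem card_filter_le_card_filter_apply_mem_le (E : Finset β) (a : ℕ) :
    (#{g : ι → β | a ≤ #{i | g i ∈ E}} : ℝ) ≤
      (card ι).choose a * ((#E / card β) ^ a * card β ^ card ι) := by
  have hcount := card_powersetCard a (univ : Finset ι)
  rw [Finset.card_univ] at hcount
  rw [← hcount]
  refine card_filter_le_card_mul_of_forall_exists _ (fun S g => ∀ i ∈ S, g i ∈ E)
    (fun g hg => ?_) (fun S hS => ?_)
  · obtain ⟨S, hS, hSa⟩ := exists_subset_card_eq hg
    exact ⟨S, mem_powersetCard.mpr ⟨subset_univ S, hSa⟩, fun i hi => (mem_filter.mp (hS hi)).2⟩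
  · have h := card_filter_forall_mem_and_forall_mem (disjoint_empty_right S) E E
    simp only [notMem_empty, IsEmpty.forall_iff, implies_true, and_true, Finset.card_empty,
      pow_zero, mul_one] at h
    rw [h, (mem_powersetCard.mp hS).2]

end Counting

section ColourClass

variable {α β : Type*} [Fintype α] [DecidableEq α] [Fintype β] [DecidableEq β] (L : Finset β)

/-- For a uniformly random `g`, every point lies in `colourClass L g` independently with
probability `#L / card β`. -/
def colourClass (g : α → β) : Finset α := {x | g x ∈ L}

theorem card_filter_subset_colourClass_disjoint [Nonempty β] {A B : Finset α}
    (hAB : Disjoint A B) :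
    (#{g : α → β | A ⊆ colourClass L g ∧ Disjoint (colourClass L g) B} : ℝ) =
      (#L / card β) ^ #A * (#Lᶜ / card β) ^ #B * card β ^ card α := by
  rw [← card_filter_forall_mem_and_forall_mem hAB]
  congr 3
  ext g
  simp [colourClass, subset_iff, disjoint_right]

theorem card_filter_subset_colourClass [Nonempty β] (A : Finset α) :
    (#{g : α → β | A ⊆ colourClass L g} : ℝ) = (#L / card β) ^ #A * card (α → β) := by
  have h := card_filter_subset_colourClass_disjoint L (disjoint_empty_right A)
  simp only [disjoint_empty_right, and_true, Finset.card_empty, pow_zero, mul_one] at h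
  rw [h, Fintype.card_fun, Nat.cast_pow]

section Colourings

variable {ι : Type*} [Fintype ι] [DecidableEq ι] [Nonempty β]

theorem card_filter_exists_unseparated_le (p q : ℕ) :
    (#{ω : ι → α → β | ∃ A B : Finset α, #A = p ∧ #B = q ∧ Disjoint A B ∧
      ∀ i, ¬(A ⊆ colourClass L (ω i) ∧ Disjoint (colourClass L (ω i)) B)} : ℝ) ≤
      (card α).choose p * (card α).choose q *
        ((1 - (#L / card β) ^ p * (#Lᶜ / card β) ^ q) ^ card ι * card (ι → α → β)) := by
  have hfail : 0 ≤ 1 - (#L / card β : ℝ) ^ p * (#Lᶜ / card β) ^ q := by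
    have hle : ∀ K : Finset β, (#K / card β : ℝ) ≤ 1 := fun K =>
      div_le_one_of_le₀ (mod_cast card_le_univ K) (by positivity)
    have := mul_le_one₀ (pow_le_one₀ (n := p) (by positivity) (hle L))
      (by positivity) (pow_le_one₀ (n := q) (by positivity) (hle Lᶜ))
    linarith
  have hJ : (#(powersetCard p (univ : Finset α) ×ˢ powersetCard q (univ : Finset α)) : ℝ) =
      (card α).choose p * (card α).choose q := by
    simp [card_product, card_powersetCard]
  rw [← hJ]
  refine card_filter_le_card_mul_of_forall_exists _ (fun AB ω => Disjoint AB.1 AB.2 ∧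
    ∀ i, ω i ∉ ({g | AB.1 ⊆ colourClass L g ∧ Disjoint (colourClass L g) AB.2} :
      Finset (α → β))) (fun ω hω => ?_) (fun AB hAB => ?_)
  · obtain ⟨A, B, hA, hB, hAB, hbad⟩ := hω
    exact ⟨(A, B), by simp [hA, hB], hAB, by simpa using hbad⟩
  · obtain ⟨hA, hB⟩ := by simpa using hAB
    by_cases hdisj : Disjoint AB.1 AB.2
    · simp only [hdisj, true_and]
      refine le_of_eq ?_
      rw [card_filter_forall_notMem, card_filter_subset_colourClass_disjoint L hdisj, hA, hB]
      simp only [Fintype.card_fun, Nat.cast_pow]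
      field_simp
    · simp only [hdisj, false_and, filter_false, Finset.card_empty, CharP.cast_eq_zero]
      positivity

theorem card_filter_exists_overloaded_le (p a : ℕ) :
    (#{ω : ι → α → β | ∃ A : Finset α, #A = p ∧ a ≤ #{i | A ⊆ colourClass L (ω i)}} : ℝ) ≤
      (card α).choose p * ((card ι).choose a * ((#L / card β) ^ p) ^ a * card (ι → α → β)) := by
  have hJ : (#(powersetCard p (univ : Finset α)) : ℝ) = (card α).choose p := by
    simp [card_powersetCard]
  rw [← hJ]
  refine card_filter_le_card_mul_of_forall_exists _ (fun A ω =>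
    a ≤ #{i | ω i ∈ ({g | A ⊆ colourClass L g} : Finset (α → β))})
    (fun ω hω => ?_) (fun A hA => ?_)
  · obtain ⟨A, hA, hcount⟩ := hω
    exact ⟨A, by simp [hA], by simpa using hcount⟩
  · rw [mem_powersetCard] at hA
    refine (card_filter_le_card_filter_apply_mem_le _ a).trans (le_of_eq ?_)
    rw [card_filter_subset_colourClass, hA.2]
    simp only [Fintype.card_fun, Nat.cast_pow]
    field_simp

theorem exists_colourings_separating_of_lt_one (p q a : ℕ)
    (h : (card α).choose p * (card α).choose q *
          (1 - (#L / card β) ^ p * (#Lᶜ / card β) ^ q) ^ card ι +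
        (card α).choose p * ((card ι).choose a * ((#L / card β) ^ p) ^ a) < (1 : ℝ)) :
    ∃ ω : ι → α → β,
      (∀ A B : Finset α, #A = p → #B = q → Disjoint A B →
        ∃ i, A ⊆ colourClass L (ω i) ∧ Disjoint (colourClass L (ω i)) B) ∧
      ∀ A : Finset α, #A = p → #{i | A ⊆ colourClass L (ω i)} < a := by
  have hlt : #{ω : ι → α → β | (∃ A B : Finset α, #A = p ∧ #B = q ∧ Disjoint A B ∧
      ∀ i, ¬(A ⊆ colourClass L (ω i) ∧ Disjoint (colourClass L (ω i)) B)) ∨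
      ∃ A : Finset α, #A = p ∧ a ≤ #{i | A ⊆ colourClass L (ω i)}} <
        #(univ : Finset (ι → α → β)) := by
    rw [filter_or, Finset.card_univ]
    refine (card_union_le _ _).trans_lt (Nat.cast_lt (α := ℝ).mp ?_)
    have hbound := mul_lt_mul_of_pos_right h (by positivity : (0 : ℝ) < card (ι → α → β))
    push_cast
    linarith [card_filter_exists_unseparated_le (α := α) (ι := ι) L p q,
      card_filter_exists_overloaded_le (α := α) (ι := ι) L p a]
  obtain ⟨ω, -, hω⟩ := exists_mem_notMem_of_card_lt_card hlt
  simp only [mem_filter, mem_univ, true_and, not_or, not_exists, not_and, not_le] at hω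
  exact ⟨ω, fun A B hA hB hAB => by simpa using hω.1 A B hA hB hAB, hω.2⟩

end Colourings

end ColourClass

section Estimates

theorem pow_mul_exp_neg_le_one {n x : ℝ} (hn : 0 < n) (k : ℕ) (hx : k * log n ≤ x) :
    n ^ k * exp (-x) ≤ 1 := by
  have hpow : n ^ k = exp (k * log n) := by rw [exp_nat_mul, exp_log hn]
  rw [hpow, ← exp_add]
  exact exp_le_one_iff.mpr (by linarith)

theorem choose_mul_choose_mul_one_sub_pow_le {n p q t : ℕ} {ρ : ℝ} (hn : 0 < n) (hρ : ρ ≤ 1)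
    (ht : (p + q + 1) * log n ≤ ρ * t) :
    (n.choose p : ℝ) * n.choose q * (1 - ρ) ^ t ≤ 1 / n := by
  have hchoose : ∀ k, (n.choose k : ℝ) ≤ (n : ℝ) ^ k := fun k => mod_cast Nat.choose_le_pow n k
  have hexp : (1 - ρ) ^ t ≤ exp (-(ρ * t)) := by
    calc (1 - ρ) ^ t ≤ exp (-ρ) ^ t :=
          pow_le_pow_left₀ (by linarith) (by linarith [add_one_le_exp (-ρ)]) t
      _ = exp (-(ρ * t)) := by rw [← exp_nat_mul]; ring_nf
  have hkey := pow_mul_exp_neg_le_one (n := (n : ℝ)) (by positivity) (p + q + 1)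
    (by push_cast; exact ht)
  calc (n.choose p : ℝ) * n.choose q * (1 - ρ) ^ t ≤ n ^ p * n ^ q * exp (-(ρ * t)) := by
        exact mul_le_mul (mul_le_mul (hchoose p) (hchoose q) (by positivity) (by positivity))
          hexp (pow_nonneg (by linarith) t) (by positivity)
    _ = n ^ (p + q + 1) * exp (-(ρ * t)) / n := by field_simp; ring
    _ ≤ 1 / n := by gcongr

theorem exp_one_div_six_le : exp 1 / 6 ≤ exp (-(1 / 2)) := by
  have hsq : exp (1 / 2) ^ 2 = exp 1 := by rw [← exp_nat_mul]; norm_num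
  have hinv : exp (1 / 2) * exp (-(1 / 2)) = 1 := by rw [← exp_add]; norm_num
  have he := exp_one_lt_three
  nlinarith [exp_pos (1 / 2), exp_pos (-(1 / 2))]

theorem choose_mul_pow_le_exp_neg {t a : ℕ} {r : ℝ} (hr : 0 ≤ r) (ha : 6 * t * r ≤ a) :
    (t.choose a : ℝ) * r ^ a ≤ exp (-(a / 2)) := by
  calc (t.choose a : ℝ) * r ^ a ≤ (t : ℝ) ^ a / a.factorial * r ^ a := by
        gcongr; exact Nat.choose_le_pow_div a t
    _ = (t * r) ^ a / a.factorial := by rw [mul_pow]; ring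
    _ ≤ ((a : ℝ) / 6) ^ a / a.factorial := by gcongr; linarith
    _ = (a : ℝ) ^ a / a.factorial / 6 ^ a := by rw [div_pow]; ring
    _ ≤ exp a / 6 ^ a := by gcongr; exact pow_div_factorial_le_exp _ (by positivity) a
    _ = (exp 1 / 6) ^ a := by rw [div_pow, ← exp_nat_mul, mul_one]
    _ ≤ exp (-(1 / 2)) ^ a := by gcongr; exact exp_one_div_six_le
    _ = exp (-(a / 2)) := by rw [← exp_nat_mul]; ring_nf

theorem choose_mul_choose_mul_pow_le {n p t a : ℕ} {r : ℝ} (hn : 0 < n) (hr : 0 ≤ r)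
    (ha : 6 * t * r ≤ a) (hlog : 2 * (p + 1) * log n ≤ a) :
    (n.choose p : ℝ) * (t.choose a * r ^ a) ≤ 1 / n := by
  have hkey := pow_mul_exp_neg_le_one (n := (n : ℝ)) (by positivity) (p + 1)
    (x := a / 2) (by push_cast; linarith)
  calc (n.choose p : ℝ) * (t.choose a * r ^ a) ≤ n ^ p * exp (-(a / 2)) := by
        gcongr
        · exact mod_cast Nat.choose_le_pow n p
        · exact choose_mul_pow_le_exp_neg hr ha
    _ = n ^ (p + 1) * exp (-(a / 2)) / n := by field_simp; ring
    _ ≤ 1 / n := by gcongr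

theorem one_add_mul_div_add_pow_le_one {x : ℝ} (hx : 0 ≤ x) {q : ℕ} (hq : 0 < q) :
    (1 + x) * (q / (x + q)) ^ q ≤ 1 := by
  have hq' : (0 : ℝ) < q := mod_cast hq
  have hbernoulli : 1 + x ≤ ((x + q) / q) ^ q := by
    have h := one_add_mul_le_pow (a := x / q) (by linarith [div_nonneg hx hq'.le]) q
    rwa [mul_div_cancel₀ _ hq'.ne', one_add_div hq'.ne', add_comm (q : ℝ)] at h
  calc (1 + x) * (q / (x + q)) ^ q ≤ ((x + q) / q) ^ q * (q / (x + q)) ^ q := by gcongr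
    _ = 1 := by
      rw [← mul_pow, div_mul_div_cancel₀ (by positivity), div_self (by positivity), one_pow]

theorem separation_error_lt_one {n p q t : ℕ} {r s : ℝ} (hn : 3 ≤ n) (hr₀ : 0 ≤ r)
    (hr₁ : r ≤ 1) (hs₀ : 0 ≤ s) (hs : (1 + p) * s ≤ 1)
    (ht : (p + q + 1) * log n ≤ r * s * t) :
    (n.choose p : ℝ) * n.choose q * (1 - r * s) ^ t +
      n.choose p * (t.choose (⌊6 * t * r⌋₊ + 1) * r ^ (⌊6 * t * r⌋₊ + 1)) < 1 := by
  have hn₀ : 0 < n := by omega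
  have hlog : 0 ≤ log n := log_nonneg (mod_cast hn₀)
  have hs₁ : s ≤ 1 := by nlinarith
  have ha : 6 * t * r ≤ (⌊6 * t * r⌋₊ + 1 : ℕ) := by
    push_cast; exact (Nat.lt_floor_add_one _).le
  have hunseparated := choose_mul_choose_mul_one_sub_pow_le (ρ := r * s) hn₀
    (mul_le_one₀ hr₁ hs₀ hs₁) ht
  have hoverloaded := choose_mul_choose_mul_pow_le (p := p) hn₀ hr₀ ha (by
    have : (1 + p) * ((p + q + 1) * log n) ≤ r * t := by
      calc _ ≤ (1 + p) * (r * s * t) := by gcongr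
        _ = (1 + p) * s * (r * t) := by ring
        _ ≤ r * t := mul_le_of_le_one_left (by positivity) hs
    nlinarith)
  have hn' : (1 : ℝ) / n + 1 / n < 1 := by
    rw [← add_div, div_lt_one (by positivity)]
    exact_mod_cast (by omega : 1 + 1 < n)
  linarith

end Estimates

theorem stmt8_general {α : Type*} [Fintype α] [DecidableEq α] (p q : ℕ) (hq : 1 ≤ q)
    (hn : 3 ≤ Fintype.card α) (t : ℕ)
    (ht : t = ⌈(((p : ℝ) + (q : ℝ)) ^ (p + q) / ((p : ℝ) ^ p * (q : ℝ) ^ q)) *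
        ((p : ℝ) + (q : ℝ) + 1) * Real.log (Fintype.card α)⌉₊) :
    ∃ F : Fin t → Finset α,
      (∀ A B : Finset α, A.card = p → B.card = q → Disjoint A B →
        ∃ i, A ⊆ F i ∧ Disjoint (F i) B) ∧
      (∀ A : Finset α, A.card = p →
        (((Finset.univ.filter fun i => A ⊆ F i).card : ℝ) ≤
          6 * (t : ℝ) * ((p : ℝ) / ((p : ℝ) + (q : ℝ))) ^ p)) := by
  set r : ℝ := ((p : ℝ) / ((p : ℝ) + (q : ℝ))) ^ p
  set s : ℝ := ((q : ℝ) / ((p : ℝ) + (q : ℝ))) ^ q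
  have hpq : (0 : ℝ) < p + q := by positivity
  have hr₁ : r ≤ 1 := pow_le_one₀ (by positivity) (div_le_one_of_le₀ (by simp) hpq.le)
  have hrs : r * s * (((p : ℝ) + q) ^ (p + q) / ((p : ℝ) ^ p * (q : ℝ) ^ q)) = 1 := by
    have hpp : (p : ℝ) ^ p ≠ 0 := mod_cast Nat.pow_self_pos.ne'
    have hqq : (q : ℝ) ^ q ≠ 0 := mod_cast Nat.pow_self_pos.ne'
    simp only [r, s, div_pow, pow_add]
    field_simp
  have hts : (p + q + 1) * log (card α) ≤ r * s * t := by
    calc (p + q + 1) * log (card α) = r * s * ((((p : ℝ) + q) ^ (p + q) /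
          ((p : ℝ) ^ p * (q : ℝ) ^ q)) * ((p : ℝ) + q + 1) * log (card α)) := by
          rw [← mul_assoc, ← mul_assoc, hrs, one_mul]
      _ ≤ r * s * t := by gcongr; rw [ht]; exact Nat.le_ceil _
  let L : Finset (Fin (p + q)) := {v | (v : ℕ) < p}
  have hL : #L = p := by simp [L, Fin.card_filter_val_lt]
  have hLc : #Lᶜ = q := by rw [card_compl, hL, Fintype.card_fin]; omega
  have : Nonempty (Fin (p + q)) := ⟨⟨0, by omega⟩⟩
  obtain ⟨ω, hsep, hcount⟩ := exists_colourings_separating_of_lt_one L (ι := Fin t) p q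
    (⌊6 * t * r⌋₊ + 1) (by
      simpa [hL, hLc, r, s] using separation_error_lt_one hn (by positivity) hr₁
        (by positivity) (one_add_mul_div_add_pow_le_one (Nat.cast_nonneg p) hq) hts)
  refine ⟨fun i => colourClass L (ω i), hsep, fun A hA => ?_⟩
  exact (Nat.le_floor_iff (by positivity)).mp (Nat.lt_succ_iff.mp (hcount A hA))

/-- Let `p, q ≥ 1`, let `U` be a finite set of size `n ≥ 3`, and set
`t = ⌈((p+q)^(p+q) / (p^p · q^q)) · (p+q+1) · ln n⌉`. Then there is a family of `t`
(not necessarily distinct) subsets of `U` such that (i) every pair of disjoint sets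
`A, B ⊆ U` with `|A| = p`, `|B| = q` is separated by some member (`A ⊆ F` and `F ∩ B = ∅`),
and (ii) every `p`-subset `A` of `U` is contained in at most `6 · t · (p/(p+q))^p`
members of the family (counted with multiplicity). -/
theorem stmt8 {α : Type*} [Fintype α] [DecidableEq α] (p q : ℕ) (hp : 1 ≤ p) (hq : 1 ≤ q)
    (hn : 3 ≤ Fintype.card α) (t : ℕ)
    (ht : t = ⌈(((p : ℝ) + (q : ℝ)) ^ (p + q) / ((p : ℝ) ^ p * (q : ℝ) ^ q)) *
        ((p : ℝ) + (q : ℝ) + 1) * Real.log (Fintype.card α)⌉₊) :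
    ∃ F : Fin t → Finset α,
      (∀ A B : Finset α, A.card = p → B.card = q → Disjoint A B →
        ∃ i, A ⊆ F i ∧ Disjoint (F i) B) ∧
      (∀ A : Finset α, A.card = p →
        (((Finset.univ.filter fun i => A ⊆ F i).card : ℝ) ≤
          6 * (t : ℝ) * ((p : ℝ) / ((p : ℝ) + (q : ℝ))) ^ p)) :=
  stmt8_general p q hq hn t ht
end

section
/- Let U be a finite set of size n, let R be a finite set, and let f_1, …, f_t : U → R be a (p+q)-perfect family of hash functions, i.e., for every S ⊆ U with |S| = p + q there is some i with f_i injective on S. Let (F̂, χ̂) be a |R|-p-q-separating collection over the universe R. Define F = ⋃_{i ≤ t} { f_i^{-1}(F̂) : F̂ ∈ F̂ }, and for every p-subset A of U define χ(A) = ⋃_{i ≤ t, f_i injective on A} { f_i^{-1}(F̂) : F̂ ∈ χ̂(f_i(A)) }. Then (F, χ) is an n-p-q-separating collection over U. -/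
/-!
Given disjoint `A` and `B` of sizes `p` and `q`, a perfect hash function `f i` is injective on
`A ∪ B`, so `f i '' A` and `f i '' B` are disjoint of sizes `p` and `q`. A set `F̂ ∈ χ̂ (f i '' A)`
separating them pulls back to `f i ⁻¹' F̂ ∈ χ A`, which contains `A` and misses `B`.
-/

/-- `(𝓕, χ)` is a `p`-`q`-separating collection over the universe `α`: `𝓕` is a family of
subsets of `α` and `χ` assigns to each `p`-subset `A` of `α` a subfamily `χ A ⊆ 𝓕` such that
(a) every `F ∈ χ A` contains `A`, and (b) for every `p`-subset `A` and every `q`-subset `B`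
disjoint from `A`, some `F ∈ χ A` satisfies `A ⊆ F` and `F ∩ B = ∅`. -/
def SeparatingCollection {α : Type*} (p q : ℕ)
    (𝓕 : Set (Set α)) (χ : Set α → Set (Set α)) : Prop :=
  (∀ A : Set α, A.ncard = p → χ A ⊆ 𝓕) ∧
  (∀ A : Set α, A.ncard = p → ∀ F ∈ χ A, A ⊆ F) ∧
  (∀ A B : Set α, A.ncard = p → B.ncard = q → Disjoint A B →
    ∃ F ∈ χ A, A ⊆ F ∧ Disjoint F B)

open Set

def IsPerfectHashFamily {ι α β : Type*} (k : ℕ) (f : ι → α → β) : Prop :=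
  ∀ S : Set α, S.ncard = k → ∃ i, InjOn (f i) S

theorem IsPerfectHashFamily.exists_injOn_union {ι α β : Type*} [Finite α] {p q : ℕ}
    {f : ι → α → β} (hf : IsPerfectHashFamily (p + q) f) {A B : Set α}
    (hA : A.ncard = p) (hB : B.ncard = q) (hAB : Disjoint A B) :
    ∃ i, InjOn (f i) (A ∪ B) :=
  hf _ <| by rw [ncard_union_eq hAB A.toFinite B.toFinite, hA, hB]

section Pullback

variable {ι α β : Type*}

def pullbackFamily (f : ι → α → β) (𝓕 : Set (Set β)) : Set (Set α) :=
  ⋃ i, (fun F => f i ⁻¹' F) '' 𝓕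

def pullbackChoice (f : ι → α → β) (χ : Set β → Set (Set β)) (A : Set α) : Set (Set α) :=
  ⋃ (i) (_ : InjOn (f i) A), (fun F => f i ⁻¹' F) '' χ (f i '' A)

theorem mem_pullbackChoice {f : ι → α → β} {χ : Set β → Set (Set β)} {A F : Set α} :
    F ∈ pullbackChoice f χ A ↔ ∃ i, InjOn (f i) A ∧ ∃ F' ∈ χ (f i '' A), f i ⁻¹' F' = F := by
  simp [pullbackChoice]

theorem SeparatingCollection.pullback [Finite α] {p q : ℕ} {f : ι → α → β}
    (hf : IsPerfectHashFamily (p + q) f) {𝓕 : Set (Set β)} {χ : Set β → Set (Set β)}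
    (hsep : SeparatingCollection p q 𝓕 χ) :
    SeparatingCollection p q (pullbackFamily f 𝓕) (pullbackChoice f χ) := by
  obtain ⟨hχ𝓕, hχsub, hχsep⟩ := hsep
  refine ⟨?_, ?_, ?_⟩
  · rintro A hA F hF
    obtain ⟨i, hinj, F', hF', rfl⟩ := mem_pullbackChoice.1 hF
    exact mem_iUnion.2 ⟨i, F', hχ𝓕 _ (hinj.ncard_image.trans hA) hF', rfl⟩
  · rintro A hA F hF
    obtain ⟨i, hinj, F', hF', rfl⟩ := mem_pullbackChoice.1 hF
    exact image_subset_iff.1 (hχsub _ (hinj.ncard_image.trans hA) F' hF')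
  · intro A B hA hB hAB
    obtain ⟨i, hinj⟩ := hf.exists_injOn_union hA hB hAB
    have hinjA : InjOn (f i) A := hinj.mono subset_union_left
    have hinjB : InjOn (f i) B := hinj.mono subset_union_right
    obtain ⟨F', hF', hAF', hF'B⟩ := hχsep _ _ (hinjA.ncard_image.trans hA)
      (hinjB.ncard_image.trans hB)
      (hAB.image hinj subset_union_left subset_union_right)
    exact ⟨f i ⁻¹' F', mem_pullbackChoice.2 ⟨i, hinjA, F', hF', rfl⟩,
      image_subset_iff.1 hAF', disjoint_image_right.1 hF'B⟩

end Pullback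

theorem stmt9_general {U R : Type*} [Fintype U] (p q t : ℕ)
    (f : Fin t → U → R)
    (hperf : ∀ S : Set U, S.ncard = p + q → ∃ i, Set.InjOn (f i) S)
    (Fh : Set (Set R)) (χh : Set R → Set (Set R))
    (hsep : SeparatingCollection p q Fh χh) :
    SeparatingCollection p q
      (⋃ i, (fun F => f i ⁻¹' F) '' Fh)
      (fun A => ⋃ (i) (_ : Set.InjOn (f i) A), (fun F => f i ⁻¹' F) '' (χh (f i '' A))) :=
  hsep.pullback hperf

/-- Let `f 1, …, f t : U → R` be a `(p+q)`-perfect family of hash functions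
and let `(F̂, χ̂)` be a separating collection over `R`. Pulling back `F̂` and `χ̂` along the
hash functions (using, for a `p`-set `A`, only those hash functions injective on `A`) yields
a separating collection over `U`. -/
theorem stmt9 {U R : Type*} [Fintype U] [Fintype R] (p q t : ℕ)
    (f : Fin t → U → R)
    (hperf : ∀ S : Set U, S.ncard = p + q → ∃ i, Set.InjOn (f i) S)
    (Fh : Set (Set R)) (χh : Set R → Set (Set R))
    (hsep : SeparatingCollection p q Fh χh) :
    SeparatingCollection p q
      (⋃ i, (fun F => f i ⁻¹' F) '' Fh)
      (fun A => ⋃ (i) (_ : Set.InjOn (f i) A), (fun F => f i ⁻¹' F) '' (χh (f i '' A))) :=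
  stmt9_general p q t f hperf Fh χh hsep
end

section
/- Let D be a finite directed graph on vertex set V and let k ≥ 2 be an integer. For distinct vertices u, v ∈ V, let P^k_{uv} be the family of all sets X ⊆ V with u, v ∈ X and |X| = k such that there is a directed path in D from u to v of length k − 1 whose vertex set is exactly X. Suppose that for every pair of distinct vertices u, v a subfamily P̂_{uv} ⊆ P^k_{uv} is given satisfying: for every Y ⊆ V with |Y| ≤ k, if there is X ∈ P^k_{uv} with X ∩ Y = ∅, then there is X̂ ∈ P̂_{uv} with X̂ ∩ Y = ∅. Then D has a directed cycle of length at least k if and only if there exist distinct vertices u, v ∈ V, a set X ∈ P̂_{uv}, and a directed cycle C of D such that the vertices of X form a consecutive segment of C inducing a directed path of C from u to v. -/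
/-- `l` is (the vertex sequence of) a directed cycle in the digraph with arc relation `arc`:
at least two distinct vertices, consecutive vertices joined by arcs, and an arc from the
last vertex back to the first. -/
def IsDirCycle {V : Type*} (arc : V → V → Prop) (l : List V) : Prop :=
  2 ≤ l.length ∧ l.Nodup ∧ l.Chain' arc ∧
    ∃ x y, l.getLast? = some x ∧ l.head? = some y ∧ arc x y

/-- `PathFam arc k u v` is the family `P^k_{uv}` of all vertex sets `X` with `u, v ∈ X` and
`|X| = k` such that there is a directed path from `u` to `v` of length `k − 1` whose vertex
set is exactly `X`. -/
def PathFam {V : Type*} [DecidableEq V] (arc : V → V → Prop) (k : ℕ) (u v : V) :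
    Set (Finset V) :=
  {X | u ∈ X ∧ v ∈ X ∧ X.card = k ∧
    ∃ l : List V, l.Nodup ∧ l.Chain' arc ∧ l.head? = some u ∧ l.getLast? = some v ∧
      l.toFinset = X}

/-!
Cut a cycle of length at least `k` into its first `k` vertices, a path from `u` to `v`, and the
rest `r`, and let `Y` be the first `k` vertices of `r`. Representativity yields `X̂ ∈ P̂ u v`,
the vertex set of a path `p` from `u` to `v` avoiding `Y`. If `p` avoids all of `r`, then `p ++ r`
is the required cycle. Otherwise let `w` be the first vertex of `r` on `p`: the part `r₁` of `r`
before `w` contains `Y`, so `p` from `w` on followed by `r₁` is a cycle of length more than `k`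
but shorter than the original one, and we conclude by induction on the length of the cycle.
-/

theorem List.le_length_of_notMem_take {α : Type*} {l₁ l₂ : List α} {w : α} {n : ℕ}
    (hw : w ∉ (l₁ ++ w :: l₂).take n) : n ≤ l₁.length := by
  by_contra! hlt
  obtain ⟨m, hm⟩ : ∃ m, n - l₁.length = m + 1 := ⟨n - l₁.length - 1, by omega⟩
  exact hw (by simp [List.take_append, hm])

section Digraph

variable {V : Type*} {arc : V → V → Prop}

theorem List.toFinset_mem_pathFam [DecidableEq V] {l : List V} {u v : V} (hnd : l.Nodup)
    (hch : l.IsChain arc) (hu : l.head? = some u) (hv : l.getLast? = some v) :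
    l.toFinset ∈ PathFam arc l.length u v :=
  ⟨List.mem_toFinset.2 (List.mem_of_mem_head? hu), List.mem_toFinset.2 (List.mem_of_mem_getLast? hv),
    List.toFinset_card_of_nodup hnd, l, hnd, hch, hu, hv, rfl⟩

theorem exists_path_of_mem_pathFam [DecidableEq V] {k : ℕ} {u v : V} {X : Finset V}
    (hX : X ∈ PathFam arc k u v) :
    ∃ l : List V, l.Nodup ∧ l.IsChain arc ∧ l.head? = some u ∧ l.getLast? = some v ∧
      l.toFinset = X ∧ l.length = k := by
  obtain ⟨-, -, hcard, l, hnd, hch, hu, hv, rfl⟩ := hX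
  exact ⟨l, hnd, hch, hu, hv, rfl, (List.toFinset_card_of_nodup hnd).symm.trans hcard⟩

namespace IsDirCycle

theorem replace_segment {p q r : List V} (hc : IsDirCycle arc (q ++ r)) (hp : p.Nodup)
    (hpc : p.IsChain arc) (hhead : p.head? = q.head?) (hlast : p.getLast? = q.getLast?)
    (hlen : q.length ≤ p.length) (hdisj : p.Disjoint r) : IsDirCycle arc (p ++ r) := by
  obtain ⟨h2, hnd, hch, x, y, hx, hy, hxy⟩ := hc
  refine ⟨by simp only [List.length_append] at h2 ⊢; omega,
    List.nodup_append.2 ⟨hp, (List.nodup_append.1 hnd).2.1, fun a ha b hb hab => hdisj ha (hab ▸ hb)⟩,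
    List.isChain_append.2 ⟨hpc, (List.isChain_append.1 hch).2.1, hlast ▸ (List.isChain_append.1 hch).2.2⟩,
    x, y, ?_, ?_, hxy⟩
  · rwa [List.getLast?_append, hlast, ← List.getLast?_append]
  · rwa [List.head?_append, hhead, ← List.head?_append]

/-- The cycle: `p` from `w` to its end (which is the end of `q`), then `r₁` back to `w`. -/
theorem exists_shortcut {p q r₁ r₂ : List V} {w : V} (hc : IsDirCycle arc (q ++ (r₁ ++ w :: r₂)))
    (hp : p.Nodup) (hpc : p.IsChain arc) (hlast : p.getLast? = q.getLast?) (hw : w ∈ p)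
    (hr₁ : r₁ ≠ []) (hdisj : p.Disjoint r₁) :
    ∃ c, IsDirCycle arc c ∧ r₁.length < c.length ∧ c.length ≤ r₁.length + p.length := by
  obtain ⟨-, hnd, hch, -⟩ := hc
  obtain ⟨s, t, rfl⟩ := List.append_of_mem hw
  obtain ⟨-, hrc, hlink⟩ := List.isChain_append.1 hch
  obtain ⟨hr₁c, -, hback⟩ := List.isChain_append.1 hrc
  obtain ⟨x, hx⟩ : ∃ x, r₁.getLast? = some x := Option.isSome_iff_exists.1 (by simpa using hr₁)
  refine ⟨(w :: t) ++ r₁, ⟨?_, ?_, ?_, x, w, ?_, rfl, hback x hx w rfl⟩, ?_, ?_⟩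
  · simp only [List.length_append, List.length_cons]
    have := List.length_pos_of_ne_nil hr₁
    omega
  · have hr₁nd : r₁.Nodup := ((List.nodup_append.1 (List.nodup_append.1 hnd).2.1).1)
    exact List.nodup_append.2 ⟨(List.nodup_append.1 hp).2.1, hr₁nd,
      fun a ha b hb hab => hdisj (List.mem_append_right s ha) (hab ▸ hb)⟩
  · refine List.isChain_append.2 ⟨hpc.infix (List.suffix_append s (w :: t)).isInfix, hr₁c, ?_⟩
    have hlast' : (w :: t).getLast? = q.getLast? := by
      rw [← hlast, List.getLast?_append_of_ne_nil _ (List.cons_ne_nil w t)]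
    rw [hlast']
    intro x hx y hy
    exact hlink x hx y (by rwa [List.head?_append_of_ne_nil _ hr₁])
  · rw [List.getLast?_append, hx]; rfl
  · simp only [List.length_append, List.length_cons]; omega
  · simp only [List.length_append, List.length_cons]; omega

end IsDirCycle

variable [DecidableEq V] {k : ℕ} {Phat : V → V → Set (Finset V)}

theorem exists_segment_mem_of_isDirCycle (hk : 2 ≤ k)
    (hsub : ∀ u v : V, u ≠ v → Phat u v ⊆ PathFam arc k u v)
    (hrep : ∀ u v : V, u ≠ v → ∀ Y : Finset V, Y.card ≤ k →
      ∀ X ∈ PathFam arc k u v, Disjoint X Y → ∃ Xhat ∈ Phat u v, Disjoint Xhat Y)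
    {c : List V} (hc : IsDirCycle arc c) (hck : k ≤ c.length) :
    ∃ u v : V, u ≠ v ∧ ∃ X ∈ Phat u v, ∃ l₁ l₂ : List V,
      IsDirCycle arc (l₁ ++ l₂) ∧ l₁.toFinset = X ∧ l₁.head? = some u ∧ l₁.getLast? = some v := by
  induction hn : c.length using Nat.strong_induction_on generalizing c with
  | _ n ih =>
  obtain ⟨q, r, rfl, hq⟩ : ∃ q r, c = q ++ r ∧ q.length = k :=
    ⟨c.take k, c.drop k, (List.take_append_drop k c).symm, List.length_take_of_le hck⟩
  obtain ⟨hqnd, -, hqr⟩ := List.nodup_append.1 hc.2.1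
  have hq0 : q ≠ [] := List.ne_nil_of_length_pos (by omega)
  have hu := List.head?_eq_some_head hq0
  have hv := List.getLast?_eq_some_getLast hq0
  have huv : q.head hq0 ≠ q.getLast hq0 := fun h => by
    obtain ⟨x, rfl⟩ := (hqnd.head_eq_getLast_iff hq0).1 h
    simp only [List.length_singleton] at hq
    omega
  have hX := hq ▸ List.toFinset_mem_pathFam hqnd (List.isChain_append.1 hc.2.2.1).1 hu hv
  have hY : Disjoint q.toFinset (r.take k).toFinset := List.disjoint_toFinset_iff_disjoint.2
    fun a ha har => hqr a ha a ((List.take_sublist k r).subset har) rfl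
  obtain ⟨_, hXh, hXhY⟩ := hrep _ _ huv _ ((List.toFinset_card_le _).trans (List.length_take_le k r))
    _ hX hY
  obtain ⟨p, hp, hpc, hpu, hpv, rfl, hpk⟩ := exists_path_of_mem_pathFam (hsub _ _ huv hXh)
  rw [List.disjoint_toFinset_iff_disjoint] at hXhY
  cases hfind : r.find? (· ∈ p) with
  | none =>
    refine ⟨_, _, huv, _, hXh, p, r, hc.replace_segment hp hpc (hpu.trans hu.symm)
      (hpv.trans hv.symm) (by omega) fun a hap har => ?_, rfl, hpu, hpv⟩
    exact List.find?_eq_none.1 hfind a har (by simpa using hap)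
  | some w =>
    obtain ⟨hwp, r₁, r₂, rfl, hr₁⟩ := List.find?_eq_some_iff_append.1 hfind
    simp only [decide_eq_true_eq] at hwp
    have hkr₁ : k ≤ r₁.length := List.le_length_of_notMem_take fun hw => hXhY hwp hw
    obtain ⟨c', hc', hlo, hhi⟩ := hc.exists_shortcut hp hpc (hpv.trans hv.symm) hwp
      (List.ne_nil_of_length_pos (by omega)) fun a hap har => by simpa [hap] using hr₁ a har
    exact ih _ (by simp only [← hn, List.length_append, List.length_cons]; omega) hc' (by omega) rfl

end Digraph

theorem stmt12_general {V : Type*} [DecidableEq V]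
    (arc : V → V → Prop) (k : ℕ) (hk : 2 ≤ k)
    (Phat : V → V → Set (Finset V))
    (hsub : ∀ u v : V, u ≠ v → Phat u v ⊆ PathFam arc k u v)
    (hrep : ∀ u v : V, u ≠ v → ∀ Y : Finset V, Y.card ≤ k →
      ∀ X ∈ PathFam arc k u v, Disjoint X Y →
        ∃ Xhat ∈ Phat u v, Disjoint Xhat Y) :
    (∃ l : List V, IsDirCycle arc l ∧ k ≤ l.length) ↔
      (∃ u v : V, u ≠ v ∧ ∃ X ∈ Phat u v, ∃ l₁ l₂ : List V,
        IsDirCycle arc (l₁ ++ l₂) ∧ l₁.toFinset = X ∧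
        l₁.head? = some u ∧ l₁.getLast? = some v) := by
  refine ⟨fun ⟨c, hc, hck⟩ => exists_segment_mem_of_isDirCycle hk hsub hrep hc hck, ?_⟩
  rintro ⟨u, v, huv, X, hX, l₁, l₂, hc, rfl, -, -⟩
  have hl₁ : l₁.length = k :=
    (List.toFinset_card_of_nodup (List.nodup_append.1 hc.2.1).1).symm.trans (hsub u v huv hX).2.2.1
  exact ⟨l₁ ++ l₂, hc, by simp only [List.length_append]; omega⟩

/-- Let `D` be a finite digraph, `k ≥ 2`, and for all distinct `u, v`
let `P̂ u v ⊆ P^k_{uv}` be a `k`-representative subfamily (for every `Y` with `|Y| ≤ k`,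
if some member of `P^k_{uv}` avoids `Y` then some member of `P̂ u v` avoids `Y`). Then `D`
has a directed cycle of length at least `k` if and only if there are distinct `u, v`, a set
`X ∈ P̂ u v`, and a directed cycle of `D` in which the vertices of `X` form a consecutive
segment inducing a directed path of the cycle from `u` to `v`. -/
theorem stmt12 {V : Type*} [Fintype V] [DecidableEq V]
    (arc : V → V → Prop) (hirr : ∀ v, ¬ arc v v) (k : ℕ) (hk : 2 ≤ k)
    (Phat : V → V → Set (Finset V))
    (hsub : ∀ u v : V, u ≠ v → Phat u v ⊆ PathFam arc k u v)
    (hrep : ∀ u v : V, u ≠ v → ∀ Y : Finset V, Y.card ≤ k →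
      ∀ X ∈ PathFam arc k u v, Disjoint X Y →
        ∃ Xhat ∈ Phat u v, Disjoint Xhat Y) :
    (∃ l : List V, IsDirCycle arc l ∧ k ≤ l.length) ↔
      (∃ u v : V, u ≠ v ∧ ∃ X ∈ Phat u v, ∃ l₁ l₂ : List V,
        IsDirCycle arc (l₁ ++ l₂) ∧ l₁.toFinset = X ∧
        l₁.head? = some u ∧ l₁.getLast? = some v) :=
  stmt12_general arc k hk Phat hsub hrep
end

section
/- Let D be a finite directed graph on vertex set V, let u ∈ V, and let ℓ and i be integers with 2 ≤ i and i + 1 ≤ ℓ. For a vertex w ∈ V, let P^i_{uw} be the family of all sets X ⊆ V with u, w ∈ X and |X| = i such that there is a directed path in D from u to w of length i − 1 whose vertex set is exactly X. Suppose that for every vertex w a subfamily P̂^i_{uw} ⊆ P^i_{uw} is given satisfying: for every Y ⊆ V with |Y| ≤ ℓ − i, if there is X ∈ P^i_{uw} with X ∩ Y = ∅, then there is X̂ ∈ P̂^i_{uw} with X̂ ∩ Y = ∅. For a vertex v, define N^{i+1}_{uv} = ⋃_{w : (w,v) is an arc of D} { X̂ ∪ {v} : X̂ ∈ P̂^i_{uw},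 v ∉ X̂ }. Then N^{i+1}_{uv} ⊆ P^{i+1}_{uv}, and N^{i+1}_{uv} satisfies: for every Y ⊆ V with |Y| ≤ ℓ − (i+1), if there is X ∈ P^{i+1}_{uv} with X ∩ Y = ∅, then there is X̂ ∈ N^{i+1}_{uv} with X̂ ∩ Y = ∅. -/
namespace PathFam

variable {V : Type*} [DecidableEq V] {arc : V → V → Prop}

theorem mem_iff {k : ℕ} {u v : V} {X : Finset V} :
    X ∈ PathFam arc k u v ↔ ∃ l : List V, l.Nodup ∧ l.IsChain arc ∧ l.head? = some u ∧
      l.getLast? = some v ∧ l.length = k ∧ l.toFinset = X := by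
  constructor
  · rintro ⟨-, -, rfl, l, hnd, hch, hu, hv, rfl⟩
    exact ⟨l, hnd, hch, hu, hv, (List.toFinset_card_of_nodup hnd).symm, rfl⟩
  · rintro ⟨l, hnd, hch, hu, hv, rfl, rfl⟩
    exact ⟨List.mem_toFinset.2 (List.mem_of_mem_head? hu),
      List.mem_toFinset.2 (List.mem_of_mem_getLast? hv),
      List.toFinset_card_of_nodup hnd, l, hnd, hch, hu, hv, rfl⟩

theorem insert_mem {k : ℕ} {u w v : V} {X : Finset V} (hX : X ∈ PathFam arc k u w)
    (hwv : arc w v) (hvX : v ∉ X) : insert v X ∈ PathFam arc (k + 1) u v := by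
  obtain ⟨l, hnd, hch, hu, hw, rfl, rfl⟩ := mem_iff.1 hX
  have hl : l ≠ [] := by rintro rfl; simp at hu
  refine mem_iff.2 ⟨l ++ [v], ?_, ?_, ?_, by simp, by simp, by simp⟩
  · exact List.nodup_append_comm.2 (List.nodup_cons.2 ⟨by simpa using hvX, hnd⟩)
  · exact hch.append (.singleton v) (by simpa [hw])
  · rwa [List.head?_append_of_ne_nil _ hl]

theorem exists_eq_insert {k : ℕ} (hk : 0 < k) {u v : V} {X : Finset V}
    (hX : X ∈ PathFam arc (k + 1) u v) :
    ∃ w, ∃ X' ∈ PathFam arc k u w, arc w v ∧ v ∉ X' ∧ X = insert v X' := by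
  obtain ⟨l, hnd, hch, hu, hv, hlen, rfl⟩ := mem_iff.1 hX
  obtain rfl | ⟨l', x, rfl⟩ := l.eq_nil_or_concat'
  · simp at hu
  obtain rfl : x = v := by simpa using hv
  have hl' : l' ≠ [] := by
    rintro rfl
    simp only [List.nil_append, List.length_singleton] at hlen
    omega
  obtain ⟨hch', -, hwv⟩ := List.isChain_append.1 hch
  refine ⟨l'.getLast hl', l'.toFinset, mem_iff.2 ⟨l', hnd.of_append_left, hch', ?_, ?_, ?_, rfl⟩,
    ?_, ?_, by simp⟩
  · rwa [List.head?_append_of_ne_nil _ hl'] at hu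
  · exact List.getLast?_eq_some_getLast hl'
  · simpa using hlen
  · exact hwv _ (List.getLast?_eq_some_getLast hl') _ rfl
  · simpa using (List.nodup_cons.1 (List.nodup_append_comm.1 hnd)).1

end PathFam

theorem stmt13_general {V : Type*} [DecidableEq V]
    (arc : V → V → Prop) (u : V) (ℓ i : ℕ) (hi : 2 ≤ i) (hiℓ : i + 1 ≤ ℓ)
    (Phat : V → Set (Finset V))
    (hsub : ∀ w : V, Phat w ⊆ PathFam arc i u w)
    (hrep : ∀ w : V, ∀ Y : Finset V, Y.card ≤ ℓ - i →
      ∀ X ∈ PathFam arc i u w, Disjoint X Y →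
        ∃ Xhat ∈ Phat w, Disjoint Xhat Y)
    (v : V) :
    ({Z : Finset V | ∃ w : V, arc w v ∧ ∃ Xhat ∈ Phat w, v ∉ Xhat ∧ Z = insert v Xhat}
        ⊆ PathFam arc (i + 1) u v) ∧
    (∀ Y : Finset V, Y.card ≤ ℓ - (i + 1) →
      ∀ X ∈ PathFam arc (i + 1) u v, Disjoint X Y →
        ∃ Xhat ∈ {Z : Finset V |
            ∃ w : V, arc w v ∧ ∃ Xh ∈ Phat w, v ∉ Xh ∧ Z = insert v Xh},
          Disjoint Xhat Y) := by
  refine ⟨?_, fun Y hY X hX hXY => ?_⟩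
  · rintro Z ⟨w, hwv, Xh, hXh, hvXh, rfl⟩
    exact PathFam.insert_mem (hsub w hXh) hwv hvXh
  · obtain ⟨w, X', hX', hwv, hvX', rfl⟩ := PathFam.exists_eq_insert (by omega) hX
    obtain ⟨hvY, hX'Y⟩ := Finset.disjoint_insert_left.1 hXY
    -- Forbidding `v` too makes the representative extendable by `v`; this costs one unit of `ℓ − i`.
    obtain ⟨Xh, hXh, hXhvY⟩ := hrep w (insert v Y) (by grind [Finset.card_insert_le]) X' hX'
      (Finset.disjoint_insert_right.2 ⟨hvX', hX'Y⟩)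
    obtain ⟨hvXh, hXhY⟩ := Finset.disjoint_insert_right.1 hXhvY
    exact ⟨insert v Xh, ⟨w, hwv, Xh, hXh, hvXh, rfl⟩, Finset.disjoint_insert_left.2 ⟨hvY, hXhY⟩⟩

/-- Let `D` be a finite digraph, `u` a vertex, `2 ≤ i` and `i + 1 ≤ ℓ`.
Suppose that for every vertex `w` a subfamily `P̂ w ⊆ P^i_{uw}` is given which is
`(ℓ − i)`-representative for `P^i_{uw}`. For a vertex `v`, let
`N = ⋃_{w : arc w v} {X̂ ∪ {v} : X̂ ∈ P̂ w, v ∉ X̂}`. Then `N ⊆ P^{i+1}_{uv}` and `N` is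
`(ℓ − (i+1))`-representative for `P^{i+1}_{uv}`. -/
theorem stmt13 {V : Type*} [Fintype V] [DecidableEq V]
    (arc : V → V → Prop) (u : V) (ℓ i : ℕ) (hi : 2 ≤ i) (hiℓ : i + 1 ≤ ℓ)
    (Phat : V → Set (Finset V))
    (hsub : ∀ w : V, Phat w ⊆ PathFam arc i u w)
    (hrep : ∀ w : V, ∀ Y : Finset V, Y.card ≤ ℓ - i →
      ∀ X ∈ PathFam arc i u w, Disjoint X Y →
        ∃ Xhat ∈ Phat w, Disjoint Xhat Y)
    (v : V) :
    ({Z : Finset V | ∃ w : V, arc w v ∧ ∃ Xhat ∈ Phat w, v ∉ Xhat ∧ Z = insert v Xhat}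
        ⊆ PathFam arc (i + 1) u v) ∧
    (∀ Y : Finset V, Y.card ≤ ℓ - (i + 1) →
      ∀ X ∈ PathFam arc (i + 1) u v, Disjoint X Y →
        ∃ Xhat ∈ {Z : Finset V |
            ∃ w : V, arc w v ∧ ∃ Xh ∈ Phat w, v ∉ Xh ∧ Z = insert v Xh},
          Disjoint Xhat Y) :=
  stmt13_general arc u ℓ i hi hiℓ Phat hsub hrep v
end

section
/- Let T be a finite tree, let x, y be vertices of T, and let c ≥ 1 be an integer. Then there exists a set W of vertices of T with {x, y} ⊆ W and |W| ≤ 2c + 4 such that every connected component U of T − W satisfies |U| ≤ |V(T)| / c and has at most two neighbors in W, i.e., |N_T(U)| ≤ 2. -/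
/-!
Root `T` at `x` and let `a ≤ b` mean that `a` lies on the path from `x` to `b`. This turns the
vertices into a meet-semilattice in which every principal down-set is a chain. Repeatedly cutting
at a maximal vertex whose remaining up-set has more than `|V(T)| / c` elements, and discarding that
up-set, produces a set `S` of fewer than `c` vertices such that every component of `T − S` has at
most `|V(T)| / c` vertices.
Closing `{x, y} ∪ S` under meets at most doubles its size. In a meet-closed set `W`, the largest
pairwise meet of three vertices is their median, which lies on all three connecting paths; so a
component of `T − W` with three neighbours in `W` would contain that median.
-/

/-- The neighborhood `N_G(U)`: vertices outside `U` adjacent to some vertex of `U`. -/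
def Nbhd {V : Type*} (G : SimpleGraph V) (U : Set V) : Set V :=
  {v | v ∉ U ∧ ∃ u ∈ U, G.Adj u v}

/-- `U` is a connected component of `G − W`: `U` is a nonempty set of vertices disjoint
from `W`, inducing a connected subgraph, and every neighbor of `U` outside `U` lies
in `W`. -/
def IsCompOutside {V : Type*} (G : SimpleGraph V) (W U : Set V) : Prop :=
  U.Nonempty ∧ Disjoint U W ∧ (SimpleGraph.induce U G).Connected ∧
    ∀ u ∈ U, ∀ v : V, G.Adj u v → v ∉ U → v ∈ W

open Finset

section TreeOrder

variable {α : Type*}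

def Finset.residualAbove [LE α] [DecidableLE α] (D S : Finset α) (u : α) : Finset α :=
  {w ∈ D | u ≤ w ∧ ∀ s ∈ S, u ≤ s → ¬s ≤ w}

@[simp]
theorem Finset.mem_residualAbove [LE α] [DecidableLE α] {D S : Finset α} {u w : α} :
    w ∈ D.residualAbove S u ↔ w ∈ D ∧ u ≤ w ∧ ∀ s ∈ S, u ≤ s → ¬s ≤ w :=
  mem_filter

theorem Finset.residualAbove_subset [LE α] [DecidableLE α] (D S : Finset α) (u : α) :
    D.residualAbove S u ⊆ {w ∈ D | u ≤ w} :=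
  fun _ hw => mem_filter.2 ⟨(mem_residualAbove.1 hw).1, (mem_residualAbove.1 hw).2.1⟩

theorem exists_card_residualAbove_lt [PartialOrder α] [DecidableEq α] [DecidableLE α]
    (hchain : ∀ a : α, IsChain (· ≤ ·) (Set.Iic a)) (k : ℕ) (D : Finset α) :
    ∃ S ⊆ D, #S * k ≤ #D ∧ ∀ u ∈ D \ S, #(D.residualAbove S u) < k := by
  induction D using Finset.strongInduction with
  | H D ih =>
  by_cases hbig : {v ∈ D | k ≤ #{w ∈ D | v ≤ w}}.Nonempty
  · -- Cut at a maximal `v` with a large up-set and recurse on the elements not above `v`.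
    obtain ⟨v, hv, hvmax⟩ := exists_maximal hbig
    rw [mem_filter] at hv
    obtain ⟨S, hSD, hScard, hS⟩ :=
      ih {w ∈ D | ¬v ≤ w} (filter_ssubset.2 ⟨v, hv.1, not_not.2 le_rfl⟩)
    refine ⟨insert v S, insert_subset hv.1 (hSD.trans (filter_subset _ _)), ?_, ?_⟩
    · calc #(insert v S) * k ≤ (#S + 1) * k := Nat.mul_le_mul_right _ (card_insert_le _ _)
        _ ≤ #{w ∈ D | ¬v ≤ w} + #{w ∈ D | v ≤ w} := by rw [add_mul, one_mul]; omega
        _ = #D := by rw [add_comm, card_filter_add_card_filter_not]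
    intro u hu
    simp only [mem_sdiff, mem_insert, not_or] at hu
    obtain ⟨huD, huv, huS⟩ := hu
    by_cases hvu : v ≤ u
    · have hu_small : ¬k ≤ #{w ∈ D | u ≤ w} := fun h =>
        huv (le_antisymm (hvmax (mem_filter.2 ⟨huD, h⟩) hvu) hvu)
      exact (card_le_card (residualAbove_subset _ _ _)).trans_lt (not_le.1 hu_small)
    · refine lt_of_le_of_lt (card_le_card fun w hw => ?_) (hS u (by simp [huD, hvu, huS]))
      simp only [mem_residualAbove, mem_filter, mem_insert, forall_eq_or_imp] at hw ⊢
      obtain ⟨hwD, huw, huvw, hSw⟩ := hw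
      refine ⟨⟨hwD, fun hvw => ?_⟩, huw, hSw⟩
      rcases (hchain w).total hvw huw with hle | hle
      · exact hvu hle
      · exact huvw hle hvw
  · refine ⟨∅, empty_subset _, by simp, fun u hu => ?_⟩
    rw [sdiff_empty] at hu
    exact (card_le_card (residualAbove_subset _ _ _)).trans_lt
      (not_le.1 fun h => hbig ⟨u, mem_filter.2 ⟨hu, h⟩⟩)

section Semilattice

variable [SemilatticeInf α]

theorem InfClosed.insert_of_forall_inf_mem {s : Set α} {a : α} (hs : InfClosed s)
    (ha : ∀ b ∈ s, a ⊓ b ∈ insert a s) : InfClosed (insert a s) := by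
  rintro b (rfl | hb) c (rfl | hc)
  · rw [inf_idem]; exact Set.mem_insert _ _
  · exact ha c hc
  · rw [inf_comm]; exact ha b hb
  · exact Set.mem_insert_of_mem _ (hs hb hc)

variable (hchain : ∀ a : α, IsChain (· ≤ ·) (Set.Iic a))
include hchain

theorem InfClosed.exists_infClosed_insert_insert [DecidableEq α] {B : Finset α}
    (hB : InfClosed (B : Set α)) (hne : B.Nonempty) (v : α) :
    ∃ m, InfClosed ((insert v (insert m B) : Finset α) : Set α) := by
  -- `m` is the largest of the meets `v ⊓ a`, `a ∈ B`; every other one is already a meet in `B`.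
  obtain ⟨a₀, ha₀, hmax⟩ := exists_maximalFor (v ⊓ ·) B hne
  set m := v ⊓ a₀
  have hle : ∀ a ∈ B, v ⊓ a ≤ m := fun a ha =>
    ((hchain v).total inf_le_left inf_le_left).elim (fun h => hmax ha h) id
  have hcases : ∀ a ∈ B, v ⊓ a = m ∨ v ⊓ a = a₀ ⊓ a := by
    intro a ha
    rcases (hchain a₀).total (show m ≤ a₀ from inf_le_right) (show a₀ ⊓ a ≤ a₀ from inf_le_left)
      with h | h
    · exact .inl ((hle a ha).antisymm (le_inf inf_le_left (h.trans inf_le_right)))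
    · exact .inr (le_antisymm (le_inf ((hle a ha).trans inf_le_right) inf_le_right)
        (le_inf (h.trans inf_le_left) inf_le_right))
  have hm : InfClosed (insert m (B : Set α)) := by
    refine hB.insert_of_forall_inf_mem fun a ha => ?_
    rcases hcases a ha with h | h
    · rw [inf_eq_left.2 (h ▸ inf_le_right : m ≤ a)]; exact Set.mem_insert _ _
    · rw [show m ⊓ a = v ⊓ a by rw [h, inf_assoc, ← h, ← inf_assoc, inf_idem], h]
      exact Set.mem_insert_of_mem _ (hB ha₀ ha)
  refine ⟨m, ?_⟩
  rw [coe_insert, coe_insert]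
  refine hm.insert_of_forall_inf_mem fun a ha => Set.mem_insert_of_mem _ ?_
  rcases ha with rfl | ha
  · rw [inf_eq_right.2 inf_le_left]; exact Set.mem_insert _ _
  · rcases hcases a ha with h | h
    · rw [h]; exact Set.mem_insert _ _
    · rw [h]; exact Set.mem_insert_of_mem _ (hB ha₀ ha)

theorem exists_infClosed_superset [DecidableEq α] (A : Finset α) :
    ∃ B : Finset α, A ⊆ B ∧ InfClosed (B : Set α) ∧ #B ≤ 2 * #A := by
  induction A using Finset.induction_on with
  | empty => exact ⟨∅, subset_rfl, by simp, by simp⟩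
  | @insert v A hvA ih =>
    obtain ⟨B, hAB, hB, hcard⟩ := ih
    obtain rfl | hne := B.eq_empty_or_nonempty
    · refine ⟨{v}, by simp [subset_empty.1 hAB], by simp, ?_⟩
      rw [card_singleton, card_insert_of_notMem hvA]
      omega
    obtain ⟨m, hm⟩ := hB.exists_infClosed_insert_insert hchain hne v
    refine ⟨insert v (insert m B), insert_subset_insert _ (hAB.trans (subset_insert _ _)), hm, ?_⟩
    calc #(insert v (insert m B)) ≤ #B + 2 :=
          (card_insert_le _ _).trans (Nat.add_le_add_right (card_insert_le _ _) 1)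
      _ ≤ 2 * #(insert v A) := by rw [card_insert_of_notMem hvA]; omega

theorem exists_max_pairwise_inf (a b c : α) :
    ∃ m ∈ ({a ⊓ b, a ⊓ c, b ⊓ c} : Set α), a ⊓ b ≤ m ∧ a ⊓ c ≤ m ∧ b ⊓ c ≤ m := by
  have hab_ac := (hchain a).total (inf_le_left : a ⊓ b ≤ a) (inf_le_left : a ⊓ c ≤ a)
  have hab_bc := (hchain b).total (inf_le_right : a ⊓ b ≤ b) (inf_le_left : b ⊓ c ≤ b)
  have hac_bc := (hchain c).total (inf_le_right : a ⊓ c ≤ c) (inf_le_right : b ⊓ c ≤ c)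
  rcases hab_ac with h₁ | h₁ <;> rcases hab_bc with h₂ | h₂ <;> rcases hac_bc with h₃ | h₃
  all_goals first
    | exact ⟨a ⊓ b, by simp, le_rfl, by assumption, by assumption⟩
    | exact ⟨a ⊓ c, by simp, by assumption, le_rfl, by assumption⟩
    | exact ⟨b ⊓ c, by simp, by assumption, by assumption, le_rfl⟩
    | exact ⟨b ⊓ c, by simp, h₁.trans h₃, h₃, le_rfl⟩
    | exact ⟨a ⊓ b, by simp, le_rfl, h₁, h₃.trans h₁⟩

end Semilattice

end TreeOrder

namespace SimpleGraph

variable {V : Type*} {G : SimpleGraph V} {a b c m u : V}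

def Between (G : SimpleGraph V) (a m b : V) : Prop :=
  G.dist a m + G.dist m b = G.dist a b

theorem Between.symm (h : G.Between a m b) : G.Between b m a := by
  have := G.dist_comm (u := a) (v := m)
  have := G.dist_comm (u := m) (v := b)
  have := G.dist_comm (u := a) (v := b)
  unfold Between at *
  omega

theorem between_self_left : G.Between a a b := by simp [Between]

theorem between_self_right : G.Between a b b := by simp [Between]

namespace Connected

variable (hG : G.Connected)
include hG

section

variable {x : V}

theorem between_trans (h₁ : G.Between x a b) (h₂ : G.Between x b c) :
    G.Between x a c ∧ G.Between a b c := by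
  have := hG.dist_triangle (u := a) (v := b) (w := c)
  have := hG.dist_triangle (u := x) (v := a) (w := c)
  unfold Between at *
  omega

theorem between_of_between (h₁ : G.Between x a c) (h₂ : G.Between a b c) :
    G.Between x a b ∧ G.Between x b c := by
  have := hG.dist_triangle (u := x) (v := a) (w := b)
  have := hG.dist_triangle (u := x) (v := b) (w := c)
  unfold Between at *
  omega

theorem eq_of_between_of_dist_le (h : G.Between x a b) (hle : G.dist x b ≤ G.dist x a) :
    a = b :=
  hG.dist_eq_zero_iff.1 (by unfold Between at h; omega)

theorem eq_of_between_of_between (h₁ : G.Between x a b) (h₂ : G.Between x b a) : a = b :=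
  hG.eq_of_between_of_dist_le h₁ (by unfold Between at h₂; omega)

end

abbrev rootedPartialOrder (x : V) : PartialOrder V where
  le a b := G.Between x a b
  le_refl _ := between_self_right
  le_trans _ _ _ h₁ h₂ := (hG.between_trans h₁ h₂).1
  le_antisymm _ _ := hG.eq_of_between_of_between

end Connected

theorem Walk.IsPath.append {p : G.Walk a m} {q : G.Walk m b} (hp : p.IsPath) (hq : q.IsPath)
    (h : ∀ z ∈ p.support, z ∈ q.support → z = m) : (p.append q).IsPath := by
  rw [Walk.isPath_def, Walk.support_append]
  refine hp.support_nodup.append hq.support_nodup.tail fun z hzp hzq => ?_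
  rw [h z hzp (List.mem_of_mem_tail hzq)] at hzq
  have := hq.support_nodup
  rw [← Walk.cons_tail_support] at this
  exact (List.nodup_cons.1 this).1 hzq

theorem Preconnected.exists_walk_support_subset {U : Set V} (hU : (G.induce U).Preconnected)
    (ha : a ∈ U) (hb : b ∈ U) : ∃ p : G.Walk a b, ∀ z ∈ p.support, z ∈ U := by
  obtain ⟨p⟩ := hU ⟨a, ha⟩ ⟨b, hb⟩
  refine ⟨p.map (Embedding.induce U).toHom, fun z hz => ?_⟩
  obtain ⟨z, -, rfl⟩ := List.mem_map.1 (by rwa [← Walk.support_map] : z ∈ p.support.map _)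
  exact z.2

namespace IsTree

variable (hT : G.IsTree)
include hT

theorem length_eq_dist {p : G.Walk a b} (hp : p.IsPath) : p.length = G.dist a b := by
  obtain ⟨q, hq, hlen⟩ := hT.connected.exists_path_of_dist a b
  rw [(hT.existsUnique_path a b).unique hp hq, hlen]

theorem between_of_mem_support {p : G.Walk a b} (hp : p.IsPath) (hm : m ∈ p.support) :
    G.Between a m b := by
  obtain ⟨q, r, hq, hr, rfl⟩ := hp.mem_support_iff_exists_append.1 hm
  rw [Between, ← hT.length_eq_dist hq, ← hT.length_eq_dist hr, ← hT.length_eq_dist hp,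
    Walk.length_append]

theorem mem_support_of_between (p : G.Walk a b) (h : G.Between a m b) : m ∈ p.support := by
  classical
  obtain ⟨q, hq, -⟩ := hT.connected.exists_path_of_dist a m
  obtain ⟨r, hr, -⟩ := hT.connected.exists_path_of_dist m b
  have hqr : (q.append r).IsPath := hq.append hr fun z hzq hzr => by
    have h₁ := hT.between_of_mem_support hq hzq
    have h₂ := hT.between_of_mem_support hr hzr
    have := hT.connected.dist_triangle (u := a) (v := z) (w := b)
    have := G.dist_comm (u := z) (v := m)
    exact hT.connected.dist_eq_zero_iff.1 (by unfold Between at *; omega)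
  -- The path `q.append r` through `m` is the unique path, hence the bypass of `p`.
  exact p.support_bypass_subset_support
    (by rw [(hT.existsUnique_path a b).unique p.bypass_isPath hqr]; simp)

theorem mem_of_between {U : Set V} (hU : (G.induce U).Preconnected) (ha : a ∈ U) (hb : b ∈ U)
    (h : G.Between a m b) : m ∈ U :=
  have ⟨p, hp⟩ := hU.exists_walk_support_subset ha hb
  hp m (hT.mem_support_of_between p h)

theorem between_total {x : V} (ha : G.Between x a u) (hb : G.Between x b u) :
    G.Between x a b ∨ G.Between x b a := by
  obtain ⟨p, hp, -⟩ := hT.connected.exists_path_of_dist x u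
  obtain ⟨q, r, hq, hr, rfl⟩ :=
    hp.mem_support_iff_exists_append.1 (hT.mem_support_of_between _ ha)
  rcases Walk.mem_support_append_iff _ _ |>.1 (hT.mem_support_of_between _ hb) with hbq | hbr
  · exact .inr (hT.between_of_mem_support hq hbq)
  · exact .inl (hT.connected.between_of_between ha (hT.between_of_mem_support hr hbr)).1

variable [Finite V] (x : V)

theorem exists_greatest_common_ancestor (a b : V) :
    ∃ m, G.Between x m a ∧ G.Between x m b ∧
      ∀ z, G.Between x z a → G.Between x z b → G.Between x z m := by
  obtain ⟨m, ⟨hma, hmb⟩, hmax⟩ := Set.exists_max_image {z | G.Between x z a ∧ G.Between x z b}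
    (G.dist x) (Set.toFinite _) ⟨x, between_self_left, between_self_left⟩
  refine ⟨m, hma, hmb, fun z hza hzb => ?_⟩
  rcases hT.between_total hza hma with hzm | hmz
  · exact hzm
  · rw [hT.connected.eq_of_between_of_dist_le hmz (hmax z ⟨hza, hzb⟩)]
    exact between_self_right

noncomputable abbrev rootedSemilatticeInf : SemilatticeInf V where
  __ := hT.connected.rootedPartialOrder x
  inf a b := (hT.exists_greatest_common_ancestor x a b).choose
  inf_le_left a b := (hT.exists_greatest_common_ancestor x a b).choose_spec.1
  inf_le_right a b := (hT.exists_greatest_common_ancestor x a b).choose_spec.2.1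
  le_inf z a b hza hzb := (hT.exists_greatest_common_ancestor x a b).choose_spec.2.2 z hza hzb

theorem isChain_Iic : letI := hT.rootedSemilatticeInf x; ∀ u : V, IsChain (· ≤ ·) (Set.Iic u) :=
  fun _ _ ha _ hb _ => hT.between_total ha hb

theorem between_inf (a b : V) : letI := hT.rootedSemilatticeInf x; G.Between a (a ⊓ b) b := by
  let _ := hT.rootedSemilatticeInf x
  obtain ⟨q, hq, -⟩ := hT.connected.exists_path_of_dist a (a ⊓ b)
  obtain ⟨r, hr, -⟩ := hT.connected.exists_path_of_dist (a ⊓ b) b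
  refine hT.between_of_mem_support (hq.append hr fun z hzq hzr => ?_) (by simp)
  obtain ⟨hmz, hza⟩ := hT.connected.between_of_between (inf_le_left : a ⊓ b ≤ a)
    (hT.between_of_mem_support hq hzq).symm
  obtain ⟨-, hzb⟩ := hT.connected.between_of_between (inf_le_right : a ⊓ b ≤ b)
    (hT.between_of_mem_support hr hzr)
  exact le_antisymm (le_inf (α := V) hza hzb) hmz

theorem between_of_inf_le {a c m : V} :
    letI := hT.rootedSemilatticeInf x; a ⊓ c ≤ m → m ≤ a ∨ m ≤ c → G.Between a m c := by
  intro hm hma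
  rcases hma with hma | hmc
  · exact (hT.connected.between_trans (hT.connected.between_trans hm hma).2.symm
      (hT.between_inf x a c)).1
  · exact (hT.connected.between_trans (hT.connected.between_trans hm hmc).2.symm
      (hT.between_inf x a c).symm).1.symm

theorem ordConnected_of_preconnected {U : Set V} (hU : (G.induce U).Preconnected) :
    letI := hT.rootedSemilatticeInf x; U.OrdConnected := by
  let _ := hT.rootedSemilatticeInf x
  exact ⟨fun _ hu _ hw _ hs => hT.mem_of_between hU hu hw (hT.connected.between_trans hs.1 hs.2).2⟩

theorem exists_isLeast_of_connected {U : Set V} (hU : (G.induce U).Connected) :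
    letI := hT.rootedSemilatticeInf x; ∃ u, IsLeast U u := by
  let _ := hT.rootedSemilatticeInf x
  obtain ⟨u, hu, hmin⟩ := Set.exists_min_image U (G.dist x) (Set.toFinite U)
    (Set.nonempty_coe_sort.1 hU.nonempty)
  refine ⟨u, hu, fun w hw => ?_⟩
  have hinf : u ⊓ w ∈ U := hT.mem_of_between hU.preconnected hu hw (hT.between_inf x u w)
  rw [← hT.connected.eq_of_between_of_dist_le (inf_le_left : u ⊓ w ≤ u) (hmin _ hinf)]
  exact inf_le_right

theorem exists_median (a b c : V) :
    letI := hT.rootedSemilatticeInf x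
    ∃ m ∈ ({a ⊓ b, a ⊓ c, b ⊓ c} : Set V), G.Between a m b ∧ G.Between a m c ∧ G.Between b m c := by
  let _ := hT.rootedSemilatticeInf x
  obtain ⟨m, hm, hab, hac, hbc⟩ := exists_max_pairwise_inf (hT.isChain_Iic x) a b c
  refine ⟨m, hm, ?_⟩
  rcases hm with rfl | rfl | rfl
  · exact ⟨hT.between_inf x a b, hT.between_of_inf_le x hac (.inl inf_le_left),
      hT.between_of_inf_le x hbc (.inl inf_le_right)⟩
  · exact ⟨hT.between_of_inf_le x hab (.inl inf_le_left), hT.between_inf x a c,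
      hT.between_of_inf_le x hbc (.inr inf_le_right)⟩
  · exact ⟨hT.between_of_inf_le x hab (.inr inf_le_left),
      hT.between_of_inf_le x hac (.inr inf_le_right), hT.between_inf x b c⟩

end IsTree

end SimpleGraph

open SimpleGraph

namespace IsCompOutside

variable {V : Type*} {G : SimpleGraph V} {W U : Set V} {a b m : V}

theorem nbhd_subset (hU : IsCompOutside G W U) : Nbhd G U ⊆ W :=
  fun w ⟨hwU, u, hu, huw⟩ => hU.2.2.2 u hu w huw hwU

theorem eq_or_eq_of_between (hT : G.IsTree) (hU : IsCompOutside G W U) (ha : a ∈ Nbhd G U)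
    (hb : b ∈ Nbhd G U) (hm : m ∈ W) (h : G.Between a m b) : m = a ∨ m = b := by
  obtain ⟨-, hdisj, hconn, -⟩ := hU
  obtain ⟨-, u, hu, hua⟩ := ha
  obtain ⟨-, u', hu', hub⟩ := hb
  obtain ⟨p, hp⟩ := hconn.preconnected.exists_walk_support_subset hu hu'
  have := hT.mem_support_of_between (Walk.cons hua.symm (p.concat hub)) h
  simp only [Walk.support_cons, Walk.support_concat, List.mem_cons, List.mem_append,
    List.not_mem_nil, or_false] at this
  rcases this with rfl | hmp | rfl
  · exact .inl rfl
  · exact absurd hm (Set.disjoint_left.1 hdisj (hp m hmp))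
  · exact .inr rfl

theorem ncard_nbhd_le_two [Finite V] (hT : G.IsTree) (x : V)
    (hW : letI := hT.rootedSemilatticeInf x; InfClosed W) (hU : IsCompOutside G W U) :
    (Nbhd G U).ncard ≤ 2 := by
  let _ := hT.rootedSemilatticeInf x
  by_contra! h
  obtain ⟨a, b, c, ha, hb, hc, hab, hac, hbc⟩ := (Set.two_lt_ncard_iff (Set.toFinite _)).1 h
  obtain ⟨m, hm, hamb, hamc, hbmc⟩ := hT.exists_median x a b c
  have hmW : m ∈ W := by
    rcases hm with rfl | rfl | rfl <;> exact hW (hU.nbhd_subset ‹_›) (hU.nbhd_subset ‹_›)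
  have := hU.eq_or_eq_of_between hT ha hb hmW hamb
  have := hU.eq_or_eq_of_between hT ha hc hmW hamc
  have := hU.eq_or_eq_of_between hT hb hc hmW hbmc
  grind

open Classical in
theorem ncard_lt_of_card_residualAbove_lt [Fintype V] [DecidableEq V] (hT : G.IsTree) (x : V)
    {S : Finset V} {k : ℕ} (hU : IsCompOutside G W U)
    (hS : letI := hT.rootedSemilatticeInf x; ∀ u ∈ univ \ S, #(univ.residualAbove S u) < k)
    (hSW : ↑S ⊆ W) :
    U.ncard < k := by
  let _ := hT.rootedSemilatticeInf x
  obtain ⟨-, hdisj, hconn, -⟩ := hU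
  obtain ⟨u, hu, hleast⟩ := hT.exists_isLeast_of_connected x hconn
  have hUS : ∀ s ∈ S, s ∉ U := fun s hs hsU => Set.disjoint_left.1 hdisj hsU (hSW hs)
  refine (Set.ncard_le_ncard fun w hw => ?_).trans_lt
    ((Set.ncard_coe_finset _).trans_lt (hS u (by simpa using fun h => hUS u h hu)))
  rw [mem_coe, mem_residualAbove]
  exact ⟨mem_univ w, hleast hw, fun s hs hus hsw => hUS s hs
    ((hT.ordConnected_of_preconnected x hconn.preconnected).out hu hw ⟨hus, hsw⟩)⟩

end IsCompOutside

/-- For every finite tree `T`, vertices `x, y` and integer `c ≥ 1`,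
there is a set `W` of vertices with `x, y ∈ W` and `|W| ≤ 2c + 4` such that every connected
component `U` of `T − W` satisfies `|U| ≤ |V(T)|/c` and `|N_T(U)| ≤ 2`. -/
theorem stmt14 {V : Type*} [Fintype V] [DecidableEq V]
    (T : SimpleGraph V) (hT : T.IsTree) (x y : V) (c : ℕ) (hc : 1 ≤ c) :
    ∃ W : Finset V, x ∈ W ∧ y ∈ W ∧ W.card ≤ 2 * c + 4 ∧
      ∀ U : Set V, IsCompOutside T (↑W) U →
        U.ncard * c ≤ Fintype.card V ∧ (Nbhd T U).ncard ≤ 2 := by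
  classical
  let _ := hT.rootedSemilatticeInf x
  obtain ⟨S, -, hScard, hS⟩ :=
    exists_card_residualAbove_lt (hT.isChain_Iic x) (Fintype.card V / c + 1) univ
  have hSc : #S < c := by
    rw [card_univ] at hScard
    by_contra! h
    nlinarith [Nat.lt_mul_div_succ (Fintype.card V) hc]
  obtain ⟨W, hAW, hW, hWcard⟩ :=
    exists_infClosed_superset (hT.isChain_Iic x) (insert x (insert y S))
  refine ⟨W, hAW (by simp), hAW (by simp), ?_, fun U hU => ⟨?_, hU.ncard_nbhd_le_two hT x hW⟩⟩
  · have := card_insert_le x (insert y S)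
    have := card_insert_le y S
    omega
  · have hUS := hU.ncard_lt_of_card_residualAbove_lt hT x hS fun s hs =>
      hAW (by simp [mem_coe.1 hs])
    exact (Nat.le_div_iff_mul_le (by omega)).1 (Nat.lt_succ_iff.1 hUS)
end

section
/- Let T be a finite tree rooted at a vertex r and let W_1 be a nonempty set of vertices of T. Let W be the least common ancestor closure of W_1, i.e., the smallest superset of W_1 such that for every pair of vertices u, v ∈ W their least common ancestor in the rooted tree T is also in W. Then |W| ≤ 2·|W_1|. -/
/-- In the graph `T` rooted at `r`, the vertex `a` is an ancestor of `v`: `a` lies on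
a (in a tree: the unique) path from `v` to `r`. -/
def IsAncestor {V : Type*} (T : SimpleGraph V) (r a v : V) : Prop :=
  ∃ p : T.Walk v r, p.IsPath ∧ a ∈ p.support

/-- In the graph `T` rooted at `r`, the vertex `a` is a least common ancestor of `u` and
`v`: it is a common ancestor of `u` and `v` that is farthest from the root `r`. -/
def IsLCA {V : Type*} (T : SimpleGraph V) (r u v a : V) : Prop :=
  IsAncestor T r a u ∧ IsAncestor T r a v ∧
    ∀ b : V, IsAncestor T r b u → IsAncestor T r b v → T.dist r b ≤ T.dist r a

/-!
The ancestor relation of a tree rooted at `r` is a partial order in which the ancestors of any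
vertex form a chain, and `IsLCA` picks out the meet. In a meet-semilattice with this chain
property, adding a point `x` to a finite meet-closed set `C` costs at most one further point:
if `a = x ⊓ w` is the largest of the meets `x ⊓ c` (`c ∈ C`), then for every `c ∈ C` either
`x ⊓ c = a` or `x ⊓ c = w ⊓ c ∈ C`, since `a` and `w ⊓ c` both lie below `w` and so are
comparable. Induction on `W₁` gives `|W| ≤ 2 |W₁|`.
-/

open Set

section InfClosure

variable {α : Type*} [SemilatticeInf α]

theorem InfClosed.insert_of_inf_mem {s : Set α} {x : α} (hs : InfClosed s)
    (hx : ∀ b ∈ s, x ⊓ b ∈ insert x s) : InfClosed (insert x s) := by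
  rintro a (rfl | ha) b (rfl | hb)
  · simp
  · exact hx b hb
  · rw [inf_comm]
    exact hx a ha
  · exact mem_insert_of_mem _ (hs ha hb)

theorem InfClosed.inf_mem_insert_of_forall_inf_le (hIic : ∀ v : α, IsChain (· ≤ ·) (Iic v))
    {C : Set α} (hC : InfClosed C) {x w : α} (hw : w ∈ C) (hmax : ∀ c ∈ C, x ⊓ c ≤ x ⊓ w)
    {c : α} (hc : c ∈ C) : x ⊓ c ∈ insert (x ⊓ w) C := by
  rcases (hIic w).total (inf_le_right : x ⊓ w ≤ w) (inf_le_left : w ⊓ c ≤ w) with h | h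
  · exact .inl <| (hmax c hc).antisymm (le_inf inf_le_left (h.trans inf_le_right))
  · refine .inr ?_
    convert hC hw hc using 1
    exact le_antisymm (le_inf ((hmax c hc).trans inf_le_right) inf_le_right)
      (le_inf (h.trans inf_le_left) inf_le_right)

theorem InfClosed.exists_infClosed_insert_insert_s16 (hIic : ∀ v : α, IsChain (· ≤ ·) (Iic v))
    {C : Set α} (hC : InfClosed C) (hfin : C.Finite) (x : α) :
    ∃ a, InfClosed (insert x (insert a C)) := by
  rcases C.eq_empty_or_nonempty with rfl | hne
  · exact ⟨x, by simp [infClosed_singleton]⟩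
  obtain ⟨w, hw, hmax⟩ := hfin.exists_maximalFor (x ⊓ ·) C hne
  have hle : ∀ c ∈ C, x ⊓ c ≤ x ⊓ w := fun c hc =>
    ((hIic x).total inf_le_left inf_le_left).elim (hmax hc) id
  have hmem : ∀ c ∈ C, x ⊓ c ∈ insert (x ⊓ w) C := fun _ =>
    hC.inf_mem_insert_of_forall_inf_le hIic hw hle
  have hC' : InfClosed (insert (x ⊓ w) C) := hC.insert_of_inf_mem fun c hc => by
    rw [inf_assoc]
    exact hmem _ (hC hw hc)
  refine ⟨x ⊓ w, hC'.insert_of_inf_mem ?_⟩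
  rintro b (rfl | hb)
  · rw [inf_left_idem]
    exact mem_insert_of_mem _ (mem_insert _ _)
  · exact mem_insert_of_mem _ (hmem b hb)

theorem Set.Finite.ncard_infClosure_le (hIic : ∀ v : α, IsChain (· ≤ ·) (Iic v)) {s : Set α}
    (hs : s.Finite) : (infClosure s).ncard ≤ 2 * s.ncard := by
  induction s, hs using Set.Finite.induction_on with
  | empty => simp
  | @insert x s hxs hs ih =>
    obtain ⟨a, ha⟩ := infClosed_infClosure.exists_infClosed_insert_insert_s16 hIic hs.infClosure x
    have hsub : infClosure (insert x s) ⊆ insert x (insert a (infClosure s)) :=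
      infClosure_min (insert_subset_insert (subset_infClosure.trans (subset_insert _ _))) ha
    calc (infClosure (insert x s)).ncard ≤ (insert x (insert a (infClosure s))).ncard :=
          ncard_le_ncard hsub ((hs.infClosure.insert a).insert x)
      _ ≤ (infClosure s).ncard + 2 := by
          have := ncard_insert_le x (insert a (infClosure s))
          have := ncard_insert_le a (infClosure s)
          omega
      _ ≤ 2 * (insert x s).ncard := by
          rw [ncard_insert_of_notMem hxs hs]
          omega

end InfClosure

section RootedTree

open SimpleGraph

variable {V : Type*} {T : SimpleGraph V} {r a b u v : V}

theorem SimpleGraph.IsTree.length_eq_dist_s16 (hT : T.IsTree) {p : T.Walk u v} (hp : p.IsPath) :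
    p.length = T.dist u v := by
  obtain ⟨q, hq⟩ := hT.connected.exists_walk_length_eq_dist u v
  rw [(hT.existsUnique_path u v).unique hp (q.isPath_of_length_eq_dist hq), hq]

theorem IsAncestor.mem_support (hT : T.IsTree) (h : IsAncestor T r a v) {p : T.Walk v r}
    (hp : p.IsPath) : a ∈ p.support := by
  obtain ⟨q, hq, haq⟩ := h
  rwa [(hT.existsUnique_path v r).unique hp hq]

theorem isAncestor_refl (hT : T.IsTree) (r v : V) : IsAncestor T r v v :=
  have ⟨p, hp, _⟩ := hT.existsUnique_path v r
  ⟨p, hp, p.start_mem_support⟩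

theorem isAncestor_root (hT : T.IsTree) (r v : V) : IsAncestor T r r v :=
  have ⟨p, hp, _⟩ := hT.existsUnique_path v r
  ⟨p, hp, p.end_mem_support⟩

theorem IsAncestor.trans (hT : T.IsTree) (hab : IsAncestor T r a b) (hbv : IsAncestor T r b v) :
    IsAncestor T r a v := by
  classical
  obtain ⟨p, hp, hb⟩ := hbv
  have ha := hab.mem_support hT (hp.dropUntil hb)
  exact ⟨p, hp, p.support_dropUntil_subset_support hb ha⟩

theorem IsAncestor.dist_lt (hT : T.IsTree) (h : IsAncestor T r a v) (hne : a ≠ v) :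
    T.dist r a < T.dist r v := by
  classical
  obtain ⟨p, hp, ha⟩ := h
  rw [dist_comm, dist_comm (v := v), ← hT.length_eq_dist_s16 hp,
    ← hT.length_eq_dist_s16 (hp.dropUntil ha)]
  exact Walk.length_dropUntil_lt_length ha hne

theorem IsAncestor.antisymm (hT : T.IsTree) (hav : IsAncestor T r a v)
    (hva : IsAncestor T r v a) : a = v := by
  by_contra hne
  exact (hav.dist_lt hT hne).not_gt (hva.dist_lt hT (Ne.symm hne))

theorem isChain_isAncestor (hT : T.IsTree) (r v : V) :
    IsChain (IsAncestor T r) {a | IsAncestor T r a v} := by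
  classical
  obtain ⟨p, hp, _⟩ := hT.existsUnique_path v r
  intro a ha b hb _
  have ha := IsAncestor.mem_support hT ha hp
  have hb := IsAncestor.mem_support hT hb hp
  rcases List.suffix_or_suffix_of_suffix (p.support_dropUntil_suffix_support ha)
      (p.support_dropUntil_suffix_support hb) with h | h
  · exact .inl ⟨_, hp.dropUntil hb, h.subset (Walk.start_mem_support _)⟩
  · exact .inr ⟨_, hp.dropUntil ha, h.subset (Walk.start_mem_support _)⟩

theorem exists_isLCA (hT : T.IsTree) (r u v : V) : ∃ a, IsLCA T r u v a := by
  obtain ⟨p, hp, _⟩ := hT.existsUnique_path u r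
  have hfin : {b | IsAncestor T r b u ∧ IsAncestor T r b v}.Finite :=
    p.support.finite_toSet.subset fun b hb => hb.1.mem_support hT hp
  obtain ⟨a, ⟨hau, hav⟩, hmax⟩ := hfin.exists_maximalFor (T.dist r) _
    ⟨r, isAncestor_root hT r u, isAncestor_root hT r v⟩
  exact ⟨a, hau, hav, fun b hbu hbv => (le_total _ _).elim (hmax ⟨hbu, hbv⟩) id⟩

theorem IsLCA.isAncestor_of_isAncestor (hT : T.IsTree) (h : IsLCA T r u v a)
    (hbu : IsAncestor T r b u) (hbv : IsAncestor T r b v) : IsAncestor T r b a := by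
  obtain rfl | hne := eq_or_ne b a
  · exact isAncestor_refl hT r b
  rcases isChain_isAncestor hT r u hbu h.1 hne with hba | hab
  · exact hba
  · exact absurd (h.2.2 b hbu hbv) (hab.dist_lt hT hne.symm).not_ge

noncomputable abbrev SimpleGraph.IsTree.ancestorSemilatticeInf (hT : T.IsTree) (r : V) :
    SemilatticeInf V where
  le a v := IsAncestor T r a v
  le_refl := isAncestor_refl hT r
  le_trans _ _ _ := IsAncestor.trans hT
  le_antisymm _ _ := IsAncestor.antisymm hT
  inf u v := (exists_isLCA hT r u v).choose
  inf_le_left u v := (exists_isLCA hT r u v).choose_spec.1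
  inf_le_right u v := (exists_isLCA hT r u v).choose_spec.2.1
  le_inf _ _ _ hbu hbv :=
    (exists_isLCA hT r _ _).choose_spec.isAncestor_of_isAncestor hT hbu hbv

theorem IsLCA.eq_inf (hT : T.IsTree) (h : IsLCA T r u v a) :
    letI := hT.ancestorSemilatticeInf r
    a = u ⊓ v :=
  letI := hT.ancestorSemilatticeInf r
  le_antisymm (le_inf h.1 h.2.1)
    (h.isAncestor_of_isAncestor hT (inf_le_left (b := v)) (inf_le_right (a := u)))

end RootedTree

theorem stmt16_general {V : Type*} [Fintype V] (T : SimpleGraph V) (hT : T.IsTree) (r : V)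
    (W1 W : Set V)
    (hmin : ∀ W' : Set V, W1 ⊆ W' →
      (∀ u ∈ W', ∀ v ∈ W', ∀ a : V, IsLCA T r u v a → a ∈ W') → W ⊆ W') :
    W.ncard ≤ 2 * W1.ncard := by
  let _ := hT.ancestorSemilatticeInf r
  have hW : W ⊆ infClosure W1 := hmin _ subset_infClosure fun u hu v hv a ha =>
    ha.eq_inf hT ▸ infClosed_infClosure hu hv
  calc W.ncard ≤ (infClosure W1).ncard := ncard_le_ncard hW (toFinite _)
    _ ≤ 2 * W1.ncard := (toFinite W1).ncard_infClosure_le (isChain_isAncestor hT r)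

/-- Let `T` be a finite tree rooted at `r` and let `W₁` be a nonempty set
of vertices. If `W` is the least common ancestor closure of `W₁` (the smallest superset of
`W₁` closed under taking least common ancestors), then `|W| ≤ 2 · |W₁|`. -/
theorem stmt16 {V : Type*} [Fintype V] (T : SimpleGraph V) (hT : T.IsTree) (r : V)
    (W1 W : Set V) (hne : W1.Nonempty) (hsub : W1 ⊆ W)
    (hclosed : ∀ u ∈ W, ∀ v ∈ W, ∀ a : V, IsLCA T r u v a → a ∈ W)
    (hmin : ∀ W' : Set V, W1 ⊆ W' →
      (∀ u ∈ W', ∀ v ∈ W', ∀ a : V, IsLCA T r u v a → a ∈ W') → W ⊆ W') :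
    W.ncard ≤ 2 * W1.ncard :=
  stmt16_general T hT r W1 W hmin
end

section
/- Let T be a finite tree rooted at a vertex r, and let W ⊆ V(T) be a nonempty set of vertices such that for every pair of vertices in W their least common ancestor is also in W. Let X be a set of vertices containing exactly one leaf of T from each connected component U of T − W with |N_T(U)| = 1. Then: for every connected component U of T − W with |N_T(U)| = 1 there exist x ∈ W and y ∈ X such that U = C^{xy} ∪ {y}; and for every connected component U of T − W with |N_T(U)| = 2 there exist x, y ∈ W such that U = C^{xy}. -/
/-- `C` is the set `C^{xy}` associated to the pair `x, y`: the empty set if `x` and `y` are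
adjacent, and otherwise the (unique) connected component of `T − {x, y}` whose neighborhood
is exactly `{x, y}`. -/
def IsCxy {V : Type*} (T : SimpleGraph V) (x y : V) (C : Set V) : Prop :=
  (T.Adj x y ∧ C = ∅) ∨
    (¬ T.Adj x y ∧ IsCompOutside T {x, y} C ∧ Nbhd T C = {x, y})

/-! A component `U` of `T − W` is described by its neighbourhood alone. If `N(U) = {x, y}`,
then `U` itself is `C^{xy}`, because acyclicity forbids the edge `xy` next to the path through `U`.
If `N(U) = {x}` and `y ∈ U` is a leaf with neighbour `w`, then either `w = x` and `U = {y}`,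
or `w ∈ U` and removing the leaf leaves the connected set `U \ {y}` with neighbourhood
`{x, y}`. -/

open SimpleGraph

section

variable {V : Type*} {G : SimpleGraph V} {U W : Set V} {x y w : V}

lemma IsCompOutside.nbhd_subset_s18 (hU : IsCompOutside G W U) : Nbhd G U ⊆ W :=
  fun _ ⟨hvU, _, hu, huv⟩ => hU.2.2.2 _ hu _ huv hvU

lemma isCompOutside_nbhd (hne : U.Nonempty) (hconn : (G.induce U).Connected) :
    IsCompOutside G (Nbhd G U) U :=
  ⟨hne, Set.disjoint_left.mpr fun _ hu hv => hv.1 hu, hconn,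
    fun u hu _ huv hvU => ⟨hvU, u, hu, huv⟩⟩

lemma exists_isPath_support_subset_of_connected_induce (hconn : (G.induce U).Connected)
    {u v : V} (hu : u ∈ U) (hv : v ∈ U) :
    ∃ p : G.Walk u v, p.IsPath ∧ ∀ z ∈ p.support, z ∈ U := by
  obtain ⟨q, hq⟩ := (hconn.preconnected ⟨u, hu⟩ ⟨v, hv⟩).exists_isPath
  refine ⟨q.map (Embedding.induce U).toHom, hq.map Subtype.val_injective, fun z hz => ?_⟩
  obtain ⟨z', -, rfl⟩ := List.mem_map.mp ((Walk.support_map _ _) ▸ hz)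
  exact z'.prop

lemma eq_singleton_of_connected_induce_of_disjoint_neighborSet
    (hconn : (G.induce U).Connected) (hy : y ∈ U) (hdisj : Disjoint (G.neighborSet y) U) :
    U = {y} := by
  refine Set.eq_singleton_iff_unique_mem.mpr ⟨hy, fun u hu => by_contra fun huy => ?_⟩
  obtain ⟨q⟩ := hconn.preconnected ⟨y, hy⟩ ⟨u, hu⟩
  have hadj := q.adj_snd (Walk.not_nil_of_ne fun h => huy (congrArg Subtype.val h).symm)
  exact Set.disjoint_left.mp hdisj hadj q.snd.prop

lemma connected_induce_diff_singleton (hconn : (G.induce U).Connected)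
    (hy : (G.neighborSet y).Subsingleton) (hne : (U \ {y}).Nonempty) :
    (G.induce (U \ {y})).Connected := by
  refine (connected_iff _).mpr ⟨?_, hne.to_subtype⟩
  rintro ⟨a, haU, hay⟩ ⟨b, hbU, hby⟩
  obtain ⟨p, hp, hpU⟩ := exists_isPath_support_subset_of_connected_induce hconn haU hbU
  have hyp : y ∉ p.support :=
    hp.isTrail.not_mem_support_of_subsingleton_neighborSet (Ne.symm hay) (Ne.symm hby) hy
  exact ⟨p.induce _ fun z hz => (⟨hpU z hz, fun hzy => hyp (hzy ▸ hz)⟩ : z ∈ U \ {y})⟩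

lemma nbhd_diff_singleton (hy : y ∈ U) (hyU : G.neighborSet y ⊆ U)
    (hw : G.Adj y w) : Nbhd G (U \ {y}) = insert y (Nbhd G U) := by
  ext v
  simp only [Nbhd, Set.mem_insert_iff, Set.mem_ofPred_eq, Set.mem_sdiff, Set.mem_singleton_iff]
  constructor
  · rintro ⟨hv, u, ⟨hu, -⟩, huv⟩
    by_cases hvy : v = y
    · exact .inl hvy
    · exact .inr ⟨fun hvU => hv ⟨hvU, hvy⟩, u, hu, huv⟩
  · rintro (rfl | ⟨hvU, u, hu, huv⟩)
    · exact ⟨fun h => h.2 rfl, w, ⟨hyU hw, hw.ne'⟩, hw.symm⟩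
    · refine ⟨fun h => hvU h.1, u, ⟨hu, ?_⟩, huv⟩
      rintro rfl
      exact hvU (hyU huv)

lemma exists_isCxy_union_of_nbhd_eq_singleton (hconn : (G.induce U).Connected)
    (hN : Nbhd G U = {x}) (hy : y ∈ U) (hleaf : G.neighborSet y = {w}) :
    ∃ C, IsCxy G x y C ∧ U = C ∪ {y} := by
  have hyw : G.Adj y w := (Set.ext_iff.mp hleaf w).mpr rfl
  have hxU : x ∉ U := (hN ▸ Set.mem_singleton x : x ∈ Nbhd G U).1
  by_cases hwU : w ∈ U
  · have hnadj : ¬ G.Adj x y := fun h => hxU (by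
      rwa [show x = w from (Set.ext_iff.mp hleaf x).mp h.symm])
    have hyU : G.neighborSet y ⊆ U := hleaf ▸ Set.singleton_subset_iff.mpr hwU
    have hNC : Nbhd G (U \ {y}) = {x, y} := by
      rw [nbhd_diff_singleton hy hyU hyw, hN, Set.pair_comm]
    have hCne : (U \ {y}).Nonempty := ⟨w, hwU, hyw.ne'⟩
    have hCconn := connected_induce_diff_singleton hconn (hleaf ▸ Set.subsingleton_singleton) hCne
    refine ⟨U \ {y}, .inr ⟨hnadj, hNC ▸ isCompOutside_nbhd hCne hCconn, hNC⟩, ?_⟩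
    rw [Set.sdiff_union_self, Set.union_eq_left.mpr (Set.singleton_subset_iff.mpr hy)]
  · have hwx : w ∈ Nbhd G U := ⟨hwU, y, hy, hyw⟩
    rw [hN, Set.mem_singleton_iff] at hwx
    have hUy : U = {y} := eq_singleton_of_connected_induce_of_disjoint_neighborSet hconn hy
      (hleaf ▸ Set.disjoint_singleton_left.mpr hwU)
    exact ⟨∅, .inl ⟨hwx ▸ hyw.symm, rfl⟩, by rw [hUy, Set.empty_union]⟩

/-- An edge between two neighbours of `U` would close a cycle through `U`. -/
lemma SimpleGraph.IsAcyclic.not_adj_of_mem_nbhd (hG : G.IsAcyclic)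
    (hconn : (G.induce U).Connected) (hx : x ∈ Nbhd G U) (hy : y ∈ Nbhd G U) :
    ¬ G.Adj x y := by
  intro hxy
  obtain ⟨hxU, u, hu, hux⟩ := hx
  obtain ⟨hyU, v, hv, hvy⟩ := hy
  have hkeep : ∀ a b, G.Adj a b → a ∈ U → (G.deleteEdges {s(x, y)}).Adj a b := by
    intro a b hab ha
    refine deleteEdges_adj.mpr ⟨hab, fun he => ?_⟩
    rcases Sym2.eq_iff.mp he with ⟨rfl, -⟩ | ⟨rfl, -⟩
    exacts [hxU ha, hyU ha]
  let f : G.induce U →g G.deleteEdges {s(x, y)} :=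
    ⟨Subtype.val, fun {a _} hab => hkeep _ _ hab a.prop⟩
  have huv : (G.deleteEdges {s(x, y)}).Reachable u v :=
    (hconn.preconnected ⟨u, hu⟩ ⟨v, hv⟩).map f
  exact isBridge_iff.mp (isAcyclic_iff_forall_adj_isBridge.mp hG hxy)
    (((hkeep u x hux hu).symm.reachable.trans huv).trans (hkeep v y hvy hv).reachable)

lemma SimpleGraph.IsAcyclic.isCxy_of_nbhd_eq_pair (hG : G.IsAcyclic) (hne : U.Nonempty)
    (hconn : (G.induce U).Connected) (hN : Nbhd G U = {x, y}) : IsCxy G x y U :=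
  .inr ⟨hG.not_adj_of_mem_nbhd hconn (hN ▸ .inl rfl) (hN ▸ .inr rfl),
    hN ▸ isCompOutside_nbhd hne hconn, hN⟩

end

theorem stmt18_general {V : Type*} (T : SimpleGraph V) (hT : T.IsTree)
    (W : Set V)
    (X : Set V)
    (hX : ∀ U : Set V, IsCompOutside T W U → (Nbhd T U).ncard = 1 →
      ∃ y, y ∈ X ∧ y ∈ U ∧ (T.neighborSet y).ncard = 1 ∧ ∀ z ∈ X ∩ U, z = y) :
    (∀ U : Set V, IsCompOutside T W U → (Nbhd T U).ncard = 1 →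
      ∃ x ∈ W, ∃ y ∈ X, ∃ C : Set V, IsCxy T x y C ∧ U = C ∪ {y}) ∧
    (∀ U : Set V, IsCompOutside T W U → (Nbhd T U).ncard = 2 →
      ∃ x ∈ W, ∃ y ∈ W, ∃ C : Set V, IsCxy T x y C ∧ U = C) := by
  refine ⟨fun U hU hcard => ?_, fun U hU hcard => ?_⟩
  · obtain ⟨y, hyX, hyU, hleaf, -⟩ := hX U hU hcard
    obtain ⟨x, hN⟩ := Set.ncard_eq_one.mp hcard
    obtain ⟨w, hw⟩ := Set.ncard_eq_one.mp hleaf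
    obtain ⟨C, hC, rfl⟩ := exists_isCxy_union_of_nbhd_eq_singleton hU.2.2.1 hN hyU hw
    exact ⟨x, hU.nbhd_subset_s18 (hN ▸ rfl), y, hyX, C, hC, rfl⟩
  · obtain ⟨x, y, -, hN⟩ := Set.ncard_eq_two.mp hcard
    exact ⟨x, hU.nbhd_subset_s18 (hN ▸ .inl rfl), y, hU.nbhd_subset_s18 (hN ▸ .inr rfl), U,
      hT.isAcyclic.isCxy_of_nbhd_eq_pair hU.1 hU.2.2.1 hN, rfl⟩

/-- Let `T` be a finite tree rooted at `r`, let `W` be a nonempty set of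
vertices closed under taking least common ancestors, and let `X` contain exactly one leaf
of `T` from each connected component `U` of `T − W` with `|N_T(U)| = 1`. Then every
component `U` of `T − W` with `|N_T(U)| = 1` equals `C^{xy} ∪ {y}` for some `x ∈ W`,
`y ∈ X`, and every component `U` with `|N_T(U)| = 2` equals `C^{xy}` for some `x, y ∈ W`. -/
theorem stmt18 {V : Type*} [Fintype V] (T : SimpleGraph V) (hT : T.IsTree) (r : V)
    (W : Set V) (hne : W.Nonempty)
    (hclosed : ∀ u ∈ W, ∀ v ∈ W, ∀ a : V, IsLCA T r u v a → a ∈ W)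
    (X : Set V)
    (hX : ∀ U : Set V, IsCompOutside T W U → (Nbhd T U).ncard = 1 →
      ∃ y, y ∈ X ∧ y ∈ U ∧ (T.neighborSet y).ncard = 1 ∧ ∀ z ∈ X ∩ U, z = y) :
    (∀ U : Set V, IsCompOutside T W U → (Nbhd T U).ncard = 1 →
      ∃ x ∈ W, ∃ y ∈ X, ∃ C : Set V, IsCxy T x y C ∧ U = C ∪ {y}) ∧
    (∀ U : Set V, IsCompOutside T W U → (Nbhd T U).ncard = 2 →
      ∃ x ∈ W, ∃ y ∈ W, ∃ C : Set V, IsCxy T x y C ∧ U = C) :=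
  stmt18_general T hT W X hX
end

section
/- For all integers k ≥ 1 and all integers p with 0 ≤ p < k, the inequality C(k, p) · (k / (k − p))^{k − p} ≤ 2.851^k holds, where C(k, p) denotes the binomial coefficient. -/
/-! With `k = p + q`, keeping the single term `i = p` of `(p + q)^k = ∑ C(k,i) p^i q^(k-i)` gives
`C(k,p) p^p q^q ≤ k^k`, so the logarithm of the left-hand side is at most
`(p + 2q) log k - p log p - 2q log q`. The concave function `x ↦ x (log t - log x)` lies below its
tangent line `t - x`; taking `t = e b² k` for the `p`-term and `t = b k` for the `q`-term, the
coefficient of `p` vanishes and the bound becomes `(e b² + 2b - 2 - 2 log b) k`. The optimal `b`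
solves `e b² + b = 1`, i.e. `b = 1 - α ≈ 0.4499`; `b = 9/20` already gives a constant below
`log 2.851`. -/

open Real

theorem Nat.choose_mul_pow_mul_pow_le_add_pow (p q : ℕ) :
    (p + q).choose p * p ^ p * q ^ q ≤ (p + q) ^ (p + q) :=
  calc (p + q).choose p * p ^ p * q ^ q = p ^ p * q ^ (p + q - p) * (p + q).choose p := by
        rw [Nat.add_sub_cancel_left]; ring
    _ ≤ ∑ i ∈ Finset.range (p + q + 1), p ^ i * q ^ (p + q - i) * (p + q).choose i :=
        Finset.single_le_sum (f := fun i => p ^ i * q ^ (p + q - i) * (p + q).choose i)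
          (fun _ _ => Nat.zero_le _) (Finset.mem_range.2 (show p < p + q + 1 by omega))
    _ = (p + q) ^ (p + q) := (add_pow _ _ _).symm

theorem Real.log_choose_le (p q : ℕ) :
    log ((p + q).choose p) ≤ (p + q) * log (p + q) - p * log p - q * log q := by
  have hbound : ((p + q).choose p : ℝ) * (p : ℝ) ^ p * (q : ℝ) ^ q ≤ ((p : ℝ) + q) ^ (p + q) := by
    exact_mod_cast Nat.choose_mul_pow_mul_pow_le_add_pow p q
  have hchoose : ((p + q).choose p : ℝ) ≠ 0 := by
    exact_mod_cast (Nat.choose_pos (Nat.le_add_right p q)).ne'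
  have hpp : (p : ℝ) ^ p ≠ 0 := by exact_mod_cast Nat.pow_self_pos.ne'
  have hqq : (q : ℝ) ^ q ≠ 0 := by exact_mod_cast Nat.pow_self_pos.ne'
  have hlog := log_le_log (by positivity) hbound
  rw [log_mul (mul_ne_zero hchoose hpp) hqq, log_mul hchoose hpp, log_pow, log_pow, log_pow] at hlog
  push_cast at hlog
  linarith

theorem Real.mul_sub_log_le_sub {x t : ℝ} (hx : 0 ≤ x) (ht : 0 < t) :
    x * (log t - log x) ≤ t - x := by
  rcases hx.eq_or_lt with rfl | hx
  · simpa using ht.le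
  have h := log_le_sub_one_of_pos (div_pos ht hx)
  rw [log_div ht.ne' hx.ne'] at h
  calc x * (log t - log x) ≤ x * (t / x - 1) := mul_le_mul_of_nonneg_left h hx.le
    _ = t - x := by field_simp

theorem Real.add_two_mul_mul_log_sub_le {x y b : ℝ} (hx : 0 ≤ x) (hy : 0 ≤ y) (hxy : 0 < x + y)
    (hb : 0 < b) :
    (x + 2 * y) * log (x + y) - x * log x - 2 * (y * log y) ≤
      (exp 1 * b ^ 2 + 2 * b - 2 - 2 * log b) * (x + y) := by
  have htx := mul_sub_log_le_sub hx (show 0 < exp 1 * b ^ 2 * (x + y) by positivity)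
  have hty := mul_sub_log_le_sub hy (mul_pos hb hxy)
  rw [log_mul (by positivity) hxy.ne', log_mul (exp_pos 1).ne' (by positivity), log_exp,
    log_pow] at htx
  rw [log_mul hb.ne' hxy.ne'] at hty
  push_cast at htx
  nlinarith

theorem Real.tangent_exponent_nine_twentieths_le_log :
    exp 1 * (9 / 20) ^ 2 + 2 * (9 / 20) - 2 - 2 * log (9 / 20) ≤ log 2.851 := by
  have hexp : 1 / (2.851 * (9 / 20) ^ 2) ≤ exp 0.5495 := by
    refine le_trans ?_ (sum_le_exp_of_nonneg (by norm_num) 7)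
    norm_num [Finset.sum_range_succ, Nat.factorial]
  have hlog := (log_le_iff_le_exp (by norm_num)).2 hexp
  rw [one_div, log_inv, log_mul (by norm_num) (by norm_num), log_pow] at hlog
  push_cast at hlog
  linarith [exp_one_lt_d9]

theorem stmt19_general (k p : ℕ) (hp : p < k) :
    (Nat.choose k p : ℝ) * ((k : ℝ) / ((k : ℝ) - (p : ℝ))) ^ (k - p) ≤ (2.851 : ℝ) ^ k := by
  obtain ⟨q, rfl⟩ : ∃ q, k = p + q := ⟨k - p, by omega⟩
  have hq : (0 : ℝ) < q := by exact_mod_cast (show 0 < q by omega)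
  have hchoose : (0 : ℝ) < (p + q).choose p := by
    exact_mod_cast Nat.choose_pos (Nat.le_add_right p q)
  rw [Nat.add_sub_cancel_left]
  push_cast
  rw [add_sub_cancel_left]
  refine (log_le_log_iff (by positivity) (by positivity)).1 ?_
  rw [log_mul hchoose.ne' (by positivity), log_pow, log_pow, log_div (by positivity) hq.ne']
  calc log ((p + q).choose p) + q * (log (p + q) - log q)
      ≤ (p + 2 * q) * log (p + q) - p * log p - 2 * (q * log q) := by
        linarith [log_choose_le p q]
    _ ≤ (exp 1 * (9 / 20) ^ 2 + 2 * (9 / 20) - 2 - 2 * log (9 / 20)) * (p + q) :=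
        add_two_mul_mul_log_sub_le (Nat.cast_nonneg p) hq.le (by positivity) (by norm_num)
    _ ≤ ((p + q : ℕ) : ℝ) * log 2.851 := by
        rw [mul_comm]; push_cast; exact mul_le_mul_of_nonneg_left tangent_exponent_nine_twentieths_le_log (by positivity)

/-- For all integers `k ≥ 1` and `0 ≤ p < k`,
`C(k, p) · (k/(k − p))^(k − p) ≤ 2.851^k`. -/
theorem stmt19 (k p : ℕ) (hk : 1 ≤ k) (hp : p < k) :
    (Nat.choose k p : ℝ) * ((k : ℝ) / ((k : ℝ) - (p : ℝ))) ^ (k - p) ≤ (2.851 : ℝ) ^ k :=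
  stmt19_general k p hp
end
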